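/- arXiv:2105.00524 — 5 statements merged into one kernel-verified Lean document; each statement's English description precedes it below -/
import Mathlib

section
/- Let G be a graph, v a vertex of G, and ℓ ≥ 1 an integer. The number of connected vertex subsets S of G such that v ∈ S and the sum of the G-degrees of vertices in S equals ℓ is at most (2e)^(2ℓ-1). -/
open scoped Classical

/-!
Deletion–contraction along an edge `vw` at the root. A connected set avoiding `w` stays connected
once the edges at `w` are deleted, and its total degree drops by at least one; a connected set
containing `w` becomes, after contracting `w` into `v`, a connected set whose total degree is at
least two smaller. Induction on `ℓ` thus bounds the number of connected sets through `v` of total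
degree at most `ℓ` by `2 ^ ℓ`, and `2 ^ ℓ ≤ (2e) ^ (2ℓ - 1)`.
-/

open Finset

namespace SimpleGraph

variable {V : Type*} {G : SimpleGraph V} {v w : V}

/-- Contraction of the edge `vw`, kept on the vertex type `V`: `w` is merged into `v` and left
isolated. -/
def contractEdge (G : SimpleGraph V) (v w : V) : SimpleGraph V :=
  fromEdgeSet (Sym2.map (Function.update id w v) '' G.edgeSet)

lemma contractEdge_adj_of_adj {x y : V} (h : G.Adj x y)
    (hne : Function.update id w v x ≠ Function.update id w v y) :
    (G.contractEdge v w).Adj (Function.update id w v x) (Function.update id w v y) :=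
  (fromEdgeSet_adj _).2 ⟨⟨s(x, y), h, rfl⟩, hne⟩

lemma exists_adj_of_contractEdge_adj {a b : V} (h : (G.contractEdge v w).Adj a b) :
    ∃ x y, G.Adj x y ∧ Function.update id w v x = a ∧ Function.update id w v y = b := by
  obtain ⟨⟨e, he, hab⟩, -⟩ := (fromEdgeSet_adj _).1 h
  induction e using Sym2.ind with
  | _ x y =>
    rcases Sym2.eq_iff.1 hab with ⟨rfl, rfl⟩ | ⟨rfl, rfl⟩
    exacts [⟨x, y, he, rfl, rfl⟩, ⟨y, x, G.adj_symm he, rfl, rfl⟩]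

theorem Connected.induce_contractEdge {S : Set V} (h : (G.induce S).Connected) (hvw : v ≠ w)
    (hv : v ∈ S) : ((G.contractEdge v w).induce (S \ {w})).Connected := by
  set r : V → V := Function.update id w v
  have hr : ∀ x ∈ S, r x ∈ S \ {w} := by
    intro x hx
    by_cases hxw : x = w
    · simp [r, hxw, hv, hvw]
    · simp [r, hxw, hx]
  let f : S → ↥(S \ {w}) := fun x => ⟨r x, hr x x.2⟩
  have hf : ∀ x : ↥(S \ {w}), f ⟨x, x.2.1⟩ = x := fun x =>
    Subtype.ext (Function.update_of_ne x.2.2 _ _)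
  have hreach : ∀ x y : S, (G.induce S).Reachable x y →
      ((G.contractEdge v w).induce (S \ {w})).Reachable (f x) (f y) := by
    intro x y hxy
    rw [reachable_iff_reflTransGen] at hxy ⊢
    refine hxy.lift' f fun a b hab => ?_
    by_cases hrab : r a = r b
    · change Relation.ReflTransGen _ (f a) (f b)
      rw [show f a = f b from Subtype.ext hrab]
    · exact .single (contractEdge_adj_of_adj hab hrab)
  refine connected_iff _ |>.2 ⟨fun a b => ?_, ⟨⟨v, hv, hvw⟩⟩⟩
  rw [← hf a, ← hf b]
  exact hreach _ _ (h.preconnected _ _)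

variable [Fintype V]

lemma neighborFinset_contractEdge_subset {u : V} (huv : u ≠ v) (huw : u ≠ w) :
    (G.contractEdge v w).neighborFinset u ⊆
      (G.neighborFinset u).image (Function.update id w v) := by
  intro b hb
  obtain ⟨x, y, hxy, hx, rfl⟩ := exists_adj_of_contractEdge_adj ((mem_neighborFinset _ _ _).1 hb)
  obtain rfl : x = u := by
    by_cases hxw : x = w
    · exact absurd (by simpa [hxw] using hx) huv.symm
    · simpa [hxw] using hx
  exact mem_image_of_mem _ ((mem_neighborFinset _ _ _).2 hxy)

lemma neighborFinset_contractEdge_self_subset :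
    (G.contractEdge v w).neighborFinset v ⊆
      (G.neighborFinset v).erase w ∪ (G.neighborFinset w).erase v := by
  intro b hb
  have hadj := (mem_neighborFinset _ _ _).1 hb
  obtain ⟨x, y, hxy, hx, rfl⟩ := exists_adj_of_contractEdge_adj hadj
  have hyw : y ≠ w := by
    rintro rfl
    simp at hadj
  rw [Function.update_of_ne hyw] at hadj ⊢
  by_cases hxw : x = w
  · subst hxw
    exact mem_union_right _ (mem_erase.2 ⟨hadj.ne', (mem_neighborFinset _ _ _).2 hxy⟩)
  · obtain rfl : x = v := by simpa [hxw] using hx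
    exact mem_union_left _ (mem_erase.2 ⟨hyw, (mem_neighborFinset _ _ _).2 hxy⟩)

lemma degree_contractEdge_le {u : V} (huv : u ≠ v) (huw : u ≠ w) :
    (G.contractEdge v w).degree u ≤ G.degree u := by
  rw [← card_neighborFinset_eq_degree, ← card_neighborFinset_eq_degree]
  exact (card_le_card (neighborFinset_contractEdge_subset huv huw)).trans card_image_le

lemma degree_contractEdge_self_add_two_le (h : G.Adj v w) :
    (G.contractEdge v w).degree v + 2 ≤ G.degree v + G.degree w := by
  rw [← card_neighborFinset_eq_degree, ← card_neighborFinset_eq_degree,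
    ← card_neighborFinset_eq_degree]
  have hsub := card_le_card (neighborFinset_contractEdge_self_subset (G := G) (v := v) (w := w))
  have hunion := card_union_le ((G.neighborFinset v).erase w) ((G.neighborFinset w).erase v)
  have hv := card_erase_add_one ((mem_neighborFinset _ _ _).2 h)
  have hw := card_erase_add_one ((mem_neighborFinset _ _ _).2 h.symm)
  omega

lemma sum_degree_contractEdge_add_two_le (h : G.Adj v w) {S : Finset V} (hv : v ∈ S)
    (hw : w ∈ S) :
    ∑ u ∈ S.erase w, (G.contractEdge v w).degree u + 2 ≤ ∑ u ∈ S, G.degree u := by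
  have hv' : v ∈ S.erase w := mem_erase.2 ⟨h.ne, hv⟩
  have hsplit_w := add_sum_erase S (fun u => G.degree u) hw
  have hsplit_v := add_sum_erase (S.erase w) (fun u => G.degree u) hv'
  have hsplit_v' := add_sum_erase (S.erase w) (fun u => (G.contractEdge v w).degree u) hv'
  have hrest : ∑ u ∈ (S.erase w).erase v, (G.contractEdge v w).degree u ≤
      ∑ u ∈ (S.erase w).erase v, G.degree u :=
    sum_le_sum fun u hu => degree_contractEdge_le (ne_of_mem_erase hu)
      (ne_of_mem_erase (mem_of_mem_erase hu))
  have hroot := degree_contractEdge_self_add_two_le h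
  omega

lemma sum_degree_deleteIncidenceSet_lt (h : G.Adj v w) {S : Finset V} (hv : v ∈ S) :
    ∑ u ∈ S, (G.deleteIncidenceSet w).degree u < ∑ u ∈ S, G.degree u := by
  have hsub : ∀ u, (G.deleteIncidenceSet w).neighborFinset u ⊆ G.neighborFinset u := fun u x hx =>
    (mem_neighborFinset _ _ _).2 (deleteIncidenceSet_le G w ((mem_neighborFinset _ _ _).1 hx))
  refine sum_lt_sum (fun u _ => ?_) ⟨v, hv, ?_⟩
  · rw [← card_neighborFinset_eq_degree, ← card_neighborFinset_eq_degree]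
    exact card_le_card (hsub u)
  · rw [← card_neighborFinset_eq_degree, ← card_neighborFinset_eq_degree]
    refine card_lt_card ((ssubset_iff_of_subset (hsub v)).2 ⟨w, ?_, ?_⟩)
    · exact (mem_neighborFinset _ _ _).2 h
    · simp [deleteIncidenceSet_adj]

/-- The paper's polymers at `v`. -/
noncomputable def polymers (G : SimpleGraph V) (v : V) (ℓ : ℕ) : Finset (Finset V) :=
  {S | v ∈ S ∧ (G.induce (S : Set V)).Connected ∧ ∑ u ∈ S, G.degree u ≤ ℓ}

@[simp]
lemma mem_polymers {ℓ : ℕ} {S : Finset V} :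
    S ∈ G.polymers v ℓ ↔ v ∈ S ∧ (G.induce (S : Set V)).Connected ∧ ∑ u ∈ S, G.degree u ≤ ℓ := by
  simp [polymers]

lemma polymers_subset_singleton_of_isolated (h : ∀ u, ¬G.Adj v u) (ℓ : ℕ) :
    G.polymers v ℓ ⊆ {{v}} := by
  intro S hS
  obtain ⟨hv, hconn, -⟩ := mem_polymers.1 hS
  rw [mem_singleton, eq_singleton_iff_unique_mem]
  refine ⟨hv, fun u hu => ?_⟩
  by_contra huv
  have : Nontrivial (S : Set V) :=
    ⟨⟨⟨v, hv⟩, ⟨u, hu⟩, fun h' => huv (congrArg Subtype.val h').symm⟩⟩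
  obtain ⟨x, hx⟩ := hconn.preconnected.exists_adj_of_nontrivial ⟨v, hv⟩
  exact h x hx

lemma polymers_zero_of_adj (h : G.Adj v w) : G.polymers v 0 = ∅ := by
  refine eq_empty_of_forall_notMem fun S hS => ?_
  obtain ⟨hv, -, hsum⟩ := mem_polymers.1 hS
  have hdeg : G.degree v ≤ ∑ u ∈ S, G.degree u :=
    single_le_sum (f := fun u => G.degree u) (fun _ _ => Nat.zero_le _) hv
  have hpos : 0 < G.degree v := (G.degree_pos_iff_exists_adj v).2 ⟨w, h⟩
  omega

lemma filter_notMem_polymers_subset (h : G.Adj v w) (ℓ : ℕ) :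
    {S ∈ G.polymers v ℓ | w ∉ S} ⊆ (G.deleteIncidenceSet w).polymers v (ℓ - 1) := by
  intro S hS
  obtain ⟨hS, hw⟩ := mem_filter.1 hS
  obtain ⟨hv, hconn, hsum⟩ := mem_polymers.1 hS
  refine mem_polymers.2 ⟨hv, ?_, ?_⟩
  · rwa [induce_deleteIncidenceSet_of_notMem G (mem_coe.not.2 hw)]
  · convert Nat.le_sub_one_of_lt ((sum_degree_deleteIncidenceSet_lt h hv).trans_le hsum)

lemma card_filter_mem_polymers_le (h : G.Adj v w) (ℓ : ℕ) :
    #{S ∈ G.polymers v ℓ | w ∈ S} ≤ #((G.contractEdge v w).polymers v (ℓ - 2)) := by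
  refine card_le_card_of_injOn (fun S => S.erase w) (fun S hS => ?_)
    ((erase_injOn' w).mono fun S hS => (mem_filter.1 hS).2)
  obtain ⟨hS, hw⟩ := mem_filter.1 hS
  obtain ⟨hv, hconn, hsum⟩ := mem_polymers.1 hS
  refine mem_polymers.2 ⟨mem_erase.2 ⟨h.ne, hv⟩, ?_, ?_⟩
  · rw [coe_erase]
    exact hconn.induce_contractEdge h.ne hv
  · have := sum_degree_contractEdge_add_two_le h hv hw
    exact Nat.le_sub_of_add_le (this.trans hsum)

theorem card_polymers_le (G : SimpleGraph V) (v : V) (ℓ : ℕ) : #(G.polymers v ℓ) ≤ 2 ^ ℓ := by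
  induction ℓ using Nat.strong_induction_on generalizing G with
  | _ ℓ ih =>
    by_cases hiso : ∀ u, ¬G.Adj v u
    · calc #(G.polymers v ℓ) ≤ #{{v}} := card_le_card (polymers_subset_singleton_of_isolated hiso ℓ)
        _ ≤ 2 ^ ℓ := by simpa using Nat.one_le_two_pow
    push Not at hiso
    obtain ⟨w, h⟩ := hiso
    rcases ℓ with _ | ℓ
    · simp [polymers_zero_of_adj h]
    calc #(G.polymers v (ℓ + 1))
        = #{S ∈ G.polymers v (ℓ + 1) | w ∈ S} + #{S ∈ G.polymers v (ℓ + 1) | w ∉ S} :=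
          (card_filter_add_card_filter_not _).symm
      _ ≤ 2 ^ (ℓ + 1 - 2) + 2 ^ (ℓ + 1 - 1) :=
          add_le_add ((card_filter_mem_polymers_le h _).trans (ih _ (by omega) _))
            ((card_le_card (filter_notMem_polymers_subset h _)).trans (ih _ (by omega) _))
      _ ≤ 2 ^ (ℓ + 1) := by
          have := Nat.pow_le_pow_right two_pos (show ℓ + 1 - 2 ≤ ℓ by omega)
          rw [pow_succ]
          simp only [add_tsub_cancel_right]
          omega

end SimpleGraph

theorem connected_subsets_with_total_degree_le_general
    {V : Type*} [Fintype V] [DecidableEq V] (G : SimpleGraph V)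
    (v : V) (ℓ : ℕ) :
    ((Finset.univ.filter (fun S : Finset V =>
        v ∈ S ∧ (G.induce (S : Set V)).Connected ∧
        ∑ u ∈ S, G.degree u = ℓ)).card : ℝ)
      ≤ (2 * Real.exp 1) ^ (2 * ℓ - 1) := by
  have hsub : (Finset.univ.filter (fun S : Finset V =>
      v ∈ S ∧ (G.induce (S : Set V)).Connected ∧ ∑ u ∈ S, G.degree u = ℓ)) ⊆ G.polymers v ℓ :=
    fun S hS => by simp_all
  calc _ ≤ (2 : ℝ) ^ ℓ := by exact_mod_cast (card_le_card hsub).trans (G.card_polymers_le v ℓ)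
    _ ≤ 2 ^ (2 * ℓ - 1) := pow_le_pow_right₀ one_le_two (by omega)
    _ ≤ (2 * Real.exp 1) ^ (2 * ℓ - 1) :=
      pow_le_pow_left₀ zero_le_two (by linarith [Real.add_one_le_exp 1]) _

/-- Lemma (npolymers): the number of connected vertex subsets `S` of a finite
simple graph `G` containing a fixed vertex `v` with total degree
`∑_{u ∈ S} deg_G(u) = ℓ` is at most `(2e)^(2ℓ-1)`. -/
theorem connected_subsets_with_total_degree_le
    {V : Type*} [Fintype V] [DecidableEq V] (G : SimpleGraph V)
    (v : V) (ℓ : ℕ) (hℓ : 1 ≤ ℓ) :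
    ((Finset.univ.filter (fun S : Finset V =>
        v ∈ S ∧ (G.induce (S : Set V)).Connected ∧
        ∑ u ∈ S, G.degree u = ℓ)).card : ℝ)
      ≤ (2 * Real.exp 1) ^ (2 * ℓ - 1) :=
  connected_subsets_with_total_degree_le_general G v ℓ
end

section
/- The number of subtrees with exactly k vertices of the infinite rooted 3-regular tree that contain the root is at most (2e)^(k-1). -/
open scoped Classical

/-- A vertex of the infinite rooted 3-regular tree, encoded as the list of
child-indices on the path from the root (head is the edge nearest the root):
the root has 3 children and every other vertex has 2 children. -/
def IsTreeVertex (w : List ℕ) : Prop :=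
  w = [] ∨ (w.headI < 3 ∧ ∀ a ∈ w.tail, a < 2)

/-- A subtree of the infinite rooted 3-regular tree containing the root is a
finite set of vertices that contains the root and is closed under taking
parents (dropping the last child-index). -/
def IsRootedSubtree (T : Finset (List ℕ)) : Prop :=
  ([] ∈ T) ∧ (∀ w ∈ T, IsTreeVertex w) ∧ (∀ w ∈ T, w ≠ [] → w.dropLast ∈ T)

namespace BollobasAux

/-- Encode a list of digits (< 4) as a natural number, injectively, so that
proper prefixes get smaller codes. -/
def enc (w : List ℕ) : ℕ := w.foldl (fun n a => 4 * n + a + 1) 0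

lemma enc_nil : enc [] = 0 := rfl

lemma enc_concat (l : List ℕ) (a : ℕ) : enc (l ++ [a]) = 4 * enc l + a + 1 := by
  simp [enc, List.foldl_append]

lemma getLast!_concat (t : List ℕ) (a : ℕ) : (t ++ [a]).getLast! = a := by
  cases t <;> simp [List.getLast!, List.getLast_append]

lemma concat_getLast {l : List ℕ} (h : l ≠ []) : l.dropLast ++ [l.getLast!] = l := by
  rcases l.eq_nil_or_concat with rfl | ⟨t, a, rfl⟩
  · exact absurd rfl h
  · simp only [List.concat_eq_append, List.dropLast_concat, getLast!_concat]

lemma enc_inj : ∀ l : List ℕ, ∀ m : List ℕ, (∀ a ∈ l, a < 4) → (∀ a ∈ m, a < 4) →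
    enc l = enc m → l = m := by
  intro l
  induction l using List.reverseRecOn with
  | nil =>
    intro m _ _ he
    rcases m.eq_nil_or_concat with rfl | ⟨t, a, rfl⟩
    · rfl
    · rw [List.concat_eq_append, enc_concat] at he
      simp [enc_nil] at he
  | append_singleton t a ih =>
    intro m hl hm he
    rcases m.eq_nil_or_concat with rfl | ⟨s, b, rfl⟩
    · rw [enc_concat] at he
      simp [enc_nil] at he
    · rw [List.concat_eq_append, enc_concat, enc_concat] at he
      have ha : a < 4 := hl a (by simp)
      have hb : b < 4 := hm b (by simp [List.concat_eq_append])
      have hab : a = b ∧ enc t = enc s := by omega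
      rw [List.concat_eq_append, hab.1,
        ih s (fun x hx => hl x (by simp [hx])) (fun x hx => hm x (by
          simp [List.concat_eq_append, hx])) hab.2]

lemma tree_entries {w : List ℕ} (h : IsTreeVertex w) : ∀ a ∈ w, a < 3 := by
  intro a ha
  rcases h with rfl | ⟨h1, h2⟩
  · simp at ha
  · cases w with
    | nil => simp at ha
    | cons x t =>
      rcases List.mem_cons.mp ha with rfl | ha'
      · simpa using h1
      · have := h2 a (by simpa using ha')
        omega

/-- The rank of a vertex inside a finite set: number of elements with a
smaller code. -/
def rk (T : Finset (List ℕ)) (w : List ℕ) : ℕ :=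
  (T.filter (fun x => enc x < enc w)).card

/-- The encoding of a subtree: for each non-root vertex, the pair
(rank of its parent, its last child-index). -/
noncomputable def encode (T : Finset (List ℕ)) : Finset (ℕ × ℕ) :=
  (T.erase []).image (fun w => (rk T w.dropLast, w.getLast!))

lemma rk_strictMono {T : Finset (List ℕ)} {p q : List ℕ} (hp : p ∈ T)
    (h : enc p < enc q) : rk T p < rk T q := by
  have hsub : insert p (T.filter (fun x => enc x < enc p)) ⊆
      T.filter (fun x => enc x < enc q) := by
    intro x hx
    rcases Finset.mem_insert.mp hx with rfl | hx'
    · exact Finset.mem_filter.mpr ⟨hp, h⟩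
    · obtain ⟨hx1, hx2⟩ := Finset.mem_filter.mp hx'
      exact Finset.mem_filter.mpr ⟨hx1, hx2.trans h⟩
  have hnm : p ∉ T.filter (fun x => enc x < enc p) := by
    intro hmem
    exact absurd (Finset.mem_filter.mp hmem).2 (lt_irrefl _)
  have := Finset.card_le_card hsub
  rw [Finset.card_insert_of_notMem hnm] at this
  unfold rk
  omega

lemma rk_inj {T : Finset (List ℕ)} (hv : ∀ w ∈ T, IsTreeVertex w) {p q : List ℕ}
    (hp : p ∈ T) (hq : q ∈ T) (h : rk T p = rk T q) : p = q := by
  rcases lt_trichotomy (enc p) (enc q) with hlt | heq | hgt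
  · exact absurd h (Nat.ne_of_lt (rk_strictMono hp hlt))
  · exact enc_inj p q (fun a ha => (tree_entries (hv p hp) a ha).trans (by norm_num))
      (fun a ha => (tree_entries (hv q hq) a ha).trans (by norm_num)) heq
  · exact absurd h.symm (Nat.ne_of_lt (rk_strictMono hq hgt))

lemma rk_nil (T : Finset (List ℕ)) : rk T [] = 0 := by
  unfold rk
  rw [Finset.filter_eq_empty_iff.mpr (by intro x _; simp [enc_nil])]
  simp

lemma rk_lt_card {T : Finset (List ℕ)} {w : List ℕ} (hw : w ∈ T) :
    rk T w < T.card := by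
  have hsub : T.filter (fun x => enc x < enc w) ⊆ T.erase w := by
    intro x hx
    obtain ⟨hx1, hx2⟩ := Finset.mem_filter.mp hx
    exact Finset.mem_erase.mpr ⟨fun h => absurd hx2 (by rw [h]; exact lt_irrefl _), hx1⟩
  have h1 := Finset.card_le_card hsub
  have h2 := Finset.card_erase_of_mem hw
  have h3 : 0 < T.card := Finset.card_pos.mpr ⟨w, hw⟩
  unfold rk
  omega

lemma rk_surj {T : Finset (List ℕ)} (hv : ∀ w ∈ T, IsTreeVertex w) {m : ℕ}
    (hm : m < T.card) : ∃ u ∈ T, rk T u = m := by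
  have hinj : Set.InjOn (rk T) ↑T := fun p hp q hq h => rk_inj hv hp hq h
  have hcard : (T.image (rk T)).card = T.card := Finset.card_image_of_injOn hinj
  have hsub : T.image (rk T) ⊆ Finset.range T.card := by
    intro x hx
    obtain ⟨u, hu, rfl⟩ := Finset.mem_image.mp hx
    exact Finset.mem_range.mpr (rk_lt_card hu)
  have heq : T.image (rk T) = Finset.range T.card :=
    Finset.eq_of_subset_of_card_le hsub (by rw [hcard, Finset.card_range])
  have : m ∈ T.image (rk T) := by rw [heq]; exact Finset.mem_range.mpr hm
  obtain ⟨u, hu, hru⟩ := Finset.mem_image.mp this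
  exact ⟨u, hu, hru⟩

lemma mem_of_ih {T T' : Finset (List ℕ)} (hT : IsRootedSubtree T)
    (hT' : IsRootedSubtree T') (hE : encode T = encode T') {n : ℕ} {w : List ℕ}
    (hw : w ∈ T) (hn : rk T w = n)
    (ih : ∀ m, m < n → ∀ u ∈ T, ∀ u' ∈ T', rk T u = m → rk T' u' = m → u = u') :
    w ∈ T' := by
  by_cases hnil : w = []
  · subst hnil; exact hT'.1
  · have hp : w.dropLast ∈ T := hT.2.2 w hw hnil
    have hwp : w.dropLast ++ [w.getLast!] = w := concat_getLast hnil
    have hpw : enc w.dropLast < enc w := by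
      calc enc w.dropLast < 4 * enc w.dropLast + w.getLast! + 1 := by omega
      _ = enc w := by rw [← enc_concat, hwp]
    have hr : rk T w.dropLast < n := hn ▸ rk_strictMono hp hpw
    have hmem : (rk T w.dropLast, w.getLast!) ∈ encode T :=
      Finset.mem_image.mpr ⟨w, Finset.mem_erase.mpr ⟨hnil, hw⟩, rfl⟩
    rw [hE] at hmem
    obtain ⟨v, hv, heq⟩ := Finset.mem_image.mp hmem
    obtain ⟨hv1, hv2⟩ := Finset.mem_erase.mp hv
    have hvd : v.dropLast ∈ T' := hT'.2.2 v hv2 hv1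
    have h1 : rk T' v.dropLast = rk T w.dropLast := congrArg Prod.fst heq
    have h2 : v.getLast! = w.getLast! := congrArg Prod.snd heq
    have hpv : w.dropLast = v.dropLast :=
      ih (rk T w.dropLast) hr w.dropLast hp v.dropLast hvd rfl h1
    have : v = w := by
      rw [← concat_getLast hv1, ← hpv, h2, hwp]
    exact this ▸ hv2

lemma main {T T' : Finset (List ℕ)} (hT : IsRootedSubtree T) (hT' : IsRootedSubtree T')
    (hc : T.card = T'.card) (hE : encode T = encode T') :
    ∀ n : ℕ, ∀ w ∈ T, ∀ w' ∈ T', rk T w = n → rk T' w' = n → w = w' := by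
  intro n
  induction n using Nat.strong_induction_on with
  | _ n ih =>
    intro w hw w' hw' hn hn'
    have ih' : ∀ m, m < n → ∀ u ∈ T', ∀ u' ∈ T, rk T' u = m → rk T u' = m → u = u' :=
      fun m hm u hu u' hu' h h' => (ih m hm u' hu' u hu h' h).symm
    have hwT' : w ∈ T' := mem_of_ih hT hT' hE hw hn ih
    have hw'T : w' ∈ T := mem_of_ih hT' hT hE.symm hw' hn' ih'
    rcases lt_trichotomy (enc w) (enc w') with hlt | heq | hgt
    · have h2 : rk T' w < n := hn' ▸ rk_strictMono hwT' hlt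
      have hm : rk T' w < T.card := h2.trans_le (hn ▸ (rk_lt_card hw).le)
      obtain ⟨u, hu, hru⟩ := rk_surj hT.2.1 hm
      have huw : u = w := ih (rk T' w) h2 u hu w hwT' hru rfl
      rw [huw] at hru
      omega
    · exact enc_inj w w'
        (fun a ha => (tree_entries (hT.2.1 w hw) a ha).trans (by norm_num))
        (fun a ha => (tree_entries (hT'.2.1 w' hw') a ha).trans (by norm_num)) heq
    · have h2 : rk T w' < n := hn ▸ rk_strictMono hw'T hgt
      have hm : rk T w' < T'.card := h2.trans_le (hn' ▸ (rk_lt_card hw').le)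
      obtain ⟨u', hu', hru'⟩ := rk_surj hT'.2.1 hm
      have huw : w' = u' := ih (rk T w') h2 w' hw'T u' hu' rfl hru'
      rw [← huw] at hru'
      omega

lemma encode_inj {T T' : Finset (List ℕ)} (hT : IsRootedSubtree T)
    (hT' : IsRootedSubtree T') (hc : T.card = T'.card)
    (hE : encode T = encode T') : T = T' := by
  apply Finset.ext
  intro w
  constructor
  · intro hw
    have hm : rk T w < T'.card := hc ▸ rk_lt_card hw
    obtain ⟨u', hu', hru'⟩ := rk_surj hT'.2.1 hm
    have := main hT hT' hc hE (rk T w) w hw u' hu' rfl hru'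
    exact this ▸ hu'
  · intro hw
    have hm : rk T' w < T.card := hc.symm ▸ rk_lt_card hw
    obtain ⟨u, hu, hru⟩ := rk_surj hT.2.1 hm
    have := main hT hT' hc hE (rk T' w) u hu w hw hru rfl
    exact this ▸ hu

lemma card_encode {T : Finset (List ℕ)} (hT : IsRootedSubtree T) :
    (encode T).card = T.card - 1 := by
  unfold encode
  rw [Finset.card_image_of_injOn, Finset.card_erase_of_mem hT.1]
  intro w1 hw1 w2 hw2 heq
  simp only [Finset.coe_erase, Set.mem_diff, Finset.mem_coe, Set.mem_singleton_iff] at hw1 hw2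
  have hp1 : w1.dropLast ∈ T := hT.2.2 w1 hw1.1 hw1.2
  have hp2 : w2.dropLast ∈ T := hT.2.2 w2 hw2.1 hw2.2
  have h1 : rk T w1.dropLast = rk T w2.dropLast := congrArg Prod.fst heq
  have h2 : w1.getLast! = w2.getLast! := congrArg Prod.snd heq
  have hpp := rk_inj hT.2.1 hp1 hp2 h1
  rw [← concat_getLast hw1.2, ← concat_getLast hw2.2, hpp, h2]

lemma getLast!_lt_two {w : List ℕ} (hv : IsTreeVertex w) (hd : w.dropLast ≠ []) :
    w.getLast! < 2 := by
  rcases hv with rfl | ⟨h1, h2⟩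
  · simp at hd
  · rcases w.eq_nil_or_concat with rfl | ⟨t, a, rfl⟩
    · simp at hd
    · rw [List.concat_eq_append] at hd ⊢
      rw [List.dropLast_concat] at hd
      rw [getLast!_concat]
      cases t with
      | nil => exact absurd rfl hd
      | cons x s =>
        apply h2
        rw [List.concat_eq_append] at h2 ⊢
        simp

def slots (k : ℕ) : Finset (ℕ × ℕ) :=
  (({0} : Finset ℕ) ×ˢ Finset.range 3) ∪ ((Finset.Ioo 0 k) ×ˢ Finset.range 2)

lemma card_slots {k : ℕ} (hk : 1 ≤ k) : (slots k).card = 2 * k + 1 := by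
  unfold slots
  rw [Finset.card_union_of_disjoint]
  · rw [Finset.card_product, Finset.card_product, Finset.card_singleton,
      Finset.card_range, Finset.card_range, Nat.card_Ioo]
    omega
  · rw [Finset.disjoint_left]
    intro p hp hp'
    rw [Finset.mem_product, Finset.mem_singleton] at hp
    rw [Finset.mem_product, Finset.mem_Ioo] at hp'
    omega

lemma encode_subset {T : Finset (List ℕ)} (hT : IsRootedSubtree T) :
    encode T ⊆ slots T.card := by
  intro pr hpr
  obtain ⟨w, hw, rfl⟩ := Finset.mem_image.mp hpr
  obtain ⟨hnil, hwT⟩ := Finset.mem_erase.mp hw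
  have hp : w.dropLast ∈ T := hT.2.2 w hwT hnil
  have hc3 : w.getLast! < 3 := by
    apply tree_entries (hT.2.1 w hwT)
    rw [← concat_getLast hnil]
    simp [getLast!_concat]
  by_cases hd : w.dropLast = []
  · apply Finset.mem_union_left
    rw [Finset.mem_product, Finset.mem_singleton, Finset.mem_range]
    exact ⟨by rw [hd, rk_nil], hc3⟩
  · apply Finset.mem_union_right
    rw [Finset.mem_product, Finset.mem_Ioo, Finset.mem_range]
    refine ⟨⟨?_, rk_lt_card hp⟩, getLast!_lt_two (hT.2.1 w hwT) hd⟩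
    rcases Nat.eq_zero_or_pos (rk T w.dropLast) with h0 | h0
    · exact absurd (rk_inj hT.2.1 hp hT.1 (by rw [h0, rk_nil])) hd
    · exact h0

lemma choose_bound {k : ℕ} (hk : 1 ≤ k) :
    (((2 * k + 1).choose (k - 1) : ℕ) : ℝ) ≤ (2 * Real.exp 1) ^ (k - 1) := by
  have he : (2.7 : ℝ) ≤ Real.exp 1 := by nlinarith [Real.exp_one_gt_d9]
  have h54 : (5.4 : ℝ) ≤ 2 * Real.exp 1 := by linarith
  have hpow : (5.4 : ℝ) ^ (k - 1) ≤ (2 * Real.exp 1) ^ (k - 1) :=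
    pow_le_pow_left₀ (by norm_num) h54 _
  by_cases hk5 : k ≤ 5
  · interval_cases k <;> refine le_trans ?_ hpow <;> norm_num [Nat.choose]
  · push_neg at hk5
    have h1 : (2 * k + 1).choose (k - 1) ≤ (2 * k + 1).choose k := by
      have h := Nat.choose_le_middle (k - 1) (2 * k + 1)
      have hmid : (2 * k + 1) / 2 = k := by omega
      rwa [hmid] at h
    have h2 : (2 * k + 1).choose k ≤ 4 ^ k := Nat.choose_middle_le_pow k
    have h3 : (((2 * k + 1).choose (k - 1) : ℕ) : ℝ) ≤ (4 : ℝ) ^ k := by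
      exact_mod_cast h1.trans h2
    refine h3.trans (le_trans ?_ hpow)
    have hk6 : k - 1 = 5 + (k - 6) := by omega
    rw [hk6]
    conv_lhs => rw [show k = 6 + (k - 6) by omega]
    rw [pow_add, pow_add]
    have ha : (4 : ℝ) ^ 6 ≤ (5.4 : ℝ) ^ 5 := by norm_num
    have hb : (4 : ℝ) ^ (k - 6) ≤ (5.4 : ℝ) ^ (k - 6) :=
      pow_le_pow_left₀ (by norm_num) (by norm_num) _
    exact mul_le_mul ha hb (pow_nonneg (by norm_num) _) (pow_nonneg (by norm_num) _)

end BollobasAux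

open BollobasAux in
/-- Bollobás's bound: the number of subtrees with exactly `k` vertices of the
infinite rooted 3-regular tree that contain the root is at most `(2e)^(k-1)`. -/
theorem card_rooted_subtrees_le (k : ℕ) (hk : 1 ≤ k) :
    (({T : Finset (List ℕ) | IsRootedSubtree T ∧ T.card = k}.ncard : ℝ))
      ≤ (2 * Real.exp 1) ^ (k - 1) := by
  set S := {T : Finset (List ℕ) | IsRootedSubtree T ∧ T.card = k} with hS
  have hinj : Set.InjOn encode S := by
    intro T hT T' hT' hE
    exact encode_inj hT.1 hT'.1 (by rw [hT.2, hT'.2]) hE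
  have himg : encode '' S ⊆ ↑(Finset.powersetCard (k - 1) (slots k)) := by
    rintro _ ⟨T, ⟨hT, hk'⟩, rfl⟩
    rw [Finset.mem_coe, Finset.mem_powersetCard]
    exact ⟨hk' ▸ encode_subset hT, by rw [card_encode hT, hk']⟩
  have h1 : S.ncard ≤ (2 * k + 1).choose (k - 1) := by
    calc S.ncard = (encode '' S).ncard := (Set.ncard_image_of_injOn hinj).symm
      _ ≤ (↑(Finset.powersetCard (k - 1) (slots k)) : Set (Finset (ℕ × ℕ))).ncard :=
          Set.ncard_le_ncard himg (Finset.finite_toSet _)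
      _ = (Finset.powersetCard (k - 1) (slots k)).card := Set.ncard_coe_finset _
      _ = (slots k).card.choose (k - 1) := Finset.card_powersetCard _ _
      _ = (2 * k + 1).choose (k - 1) := by rw [card_slots hk]
  calc (S.ncard : ℝ) ≤ (((2 * k + 1).choose (k - 1) : ℕ) : ℝ) := by exact_mod_cast h1
    _ ≤ (2 * Real.exp 1) ^ (k - 1) := choose_bound hk
end

section
/- Let H be a multigraph on vertex set V with degree sequence x, and let S ⊆ V with deg_H(S) even. If H is drawn from the configuration model on degree sequence x, then the probability that there are no edges between S and its complement is at most binom(m, deg_H(S)/2)^(-1), where 2m = ∑_i x_i. -/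
/-!
A pairing of the half-edges with no edge between `S` and its complement is exactly a pairing of
the `2k = deg_H(S)` half-edges at `S` together with a pairing of the `2(m - k)` others. Since a
set of `2n` elements has `(2n - 1)‼ = (2n)! / (2ⁿ n!)` pairings, the probability is
`(2k - 1)‼ (2(m - k) - 1)‼ / (2m - 1)‼ = C(m, k) / C(2m, 2k)`, and `C(m, k)² ≤ C(2m, 2k)` is one
term of Vandermonde's identity.
-/

open scoped Classical

/-- A perfect matching on the set of half-edges: a fixed-point-free involution. -/
def IsPairing {H : Type*} (f : H → H) : Prop :=
  Function.Involutive f ∧ ∀ x, f x ≠ x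

open scoped Nat

abbrev Pairings (α : Type*) := {f : α → α // IsPairing f}

lemma Function.Involutive.map_not {α : Type*} {f : α → α} (hf : Function.Involutive f)
    {P : α → Prop} (hP : ∀ x, P x → P (f x)) (x : α) (hx : ¬P x) : ¬P (f x) :=
  fun h => hx (hf x ▸ hP _ h)

namespace IsPairing

variable {α : Type*} {f : α → α}

lemma subtypeMap (hf : IsPairing f) {P : α → Prop} (hP : ∀ x, P x → P (f x)) :
    IsPairing (Subtype.map f hP) :=
  ⟨fun x => Subtype.ext (hf.1 x), fun x h => hf.2 x (congrArg Subtype.val h)⟩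

def glue (P : α → Prop) [DecidablePred P] (g : {x // P x} → {x // P x})
    (h : {x // ¬P x} → {x // ¬P x}) (x : α) : α :=
  if hx : P x then g ⟨x, hx⟩ else h ⟨x, hx⟩

variable {P : α → Prop} [DecidablePred P] {g : {x // P x} → {x // P x}}
  {h : {x // ¬P x} → {x // ¬P x}}

lemma glue_of_pos (x : {x // P x}) : glue P g h x = g x := dif_pos x.2

lemma glue_of_neg (x : {x // ¬P x}) : glue P g h x = h x := dif_neg x.2

lemma glue_preserves (x : α) (hx : P x) : P (glue P g h x) :=
  glue_of_pos (g := g) (h := h) ⟨x, hx⟩ ▸ (g ⟨x, hx⟩).2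

lemma glue_isPairing (hg : IsPairing g) (hh : IsPairing h) : IsPairing (glue P g h) := by
  refine ⟨fun x => ?_, fun x => ?_⟩
  · by_cases hx : P x
    · rw [glue_of_pos ⟨x, hx⟩, glue_of_pos (g ⟨x, hx⟩), hg.1]
    · rw [glue_of_neg ⟨x, hx⟩, glue_of_neg (h ⟨x, hx⟩), hh.1]
  · by_cases hx : P x
    · rw [glue_of_pos ⟨x, hx⟩]
      exact fun e => hg.2 _ (Subtype.ext e)
    · rw [glue_of_neg ⟨x, hx⟩]
      exact fun e => hh.2 _ (Subtype.ext e)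

lemma apply_eq_iff_preserves_pair (hf : IsPairing f) {x₀ y : α} (hy : y ≠ x₀) :
    f x₀ = y ↔ ∀ z, (z = x₀ ∨ z = y) → (f z = x₀ ∨ f z = y) := by
  refine ⟨?_, fun h => (h x₀ (.inl rfl)).resolve_left (hf.2 x₀)⟩
  rintro rfl z (rfl | rfl)
  · exact .inr rfl
  · exact .inl (hf.1 x₀)

end IsPairing

open IsPairing

def pairingsPreservingEquiv {α : Type*} (P : α → Prop) [DecidablePred P] :
    {f : Pairings α // ∀ x, P x → P (f.1 x)} ≃ Pairings {x // P x} × Pairings {x // ¬P x} where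
  toFun f := (⟨_, f.1.2.subtypeMap f.2⟩, ⟨_, f.1.2.subtypeMap (f.1.2.1.map_not f.2)⟩)
  invFun p := ⟨⟨glue P p.1.1 p.2.1, glue_isPairing p.1.2 p.2.2⟩, glue_preserves⟩
  left_inv f := by
    ext x
    by_cases hx : P x
    · exact glue_of_pos ⟨x, hx⟩
    · exact glue_of_neg ⟨x, hx⟩
  right_inv p := by
    ext x
    · exact glue_of_pos x
    · exact glue_of_neg x

lemma card_pairings_preserving {α : Type*} (P : α → Prop) [DecidablePred P] :
    Nat.card {f : Pairings α // ∀ x, P x → P (f.1 x)} =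
      Nat.card (Pairings {x // P x}) * Nat.card (Pairings {x // ¬P x}) := by
  rw [Nat.card_congr (pairingsPreservingEquiv P), Nat.card_prod]

lemma card_pairings_of_card_eq_two {α : Type*} (hα : Nat.card α = 2) :
    Nat.card (Pairings α) = 1 := by
  have other (x : α) : ∃! y, y ≠ x := (Nat.card_eq_two_iff' x).1 hα
  choose f hf huniq using other
  rw [Nat.card_eq_one_iff_unique]
  refine ⟨⟨fun g g' => Subtype.ext (funext fun x => ?_)⟩, ⟨⟨f, fun x => ?_, hf⟩⟩⟩
  · exact (huniq x _ (g.2.2 x)).trans (huniq x _ (g'.2.2 x)).symm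
  · exact (huniq (f x) x (hf x).symm).symm

lemma Nat.card_subtype_add_card_subtype_not {α : Type*} [Finite α] (P : α → Prop) :
    Nat.card {x // P x} + Nat.card {x // ¬P x} = Nat.card α :=
  Set.ncard_add_ncard_compl {x | P x}

lemma card_pairings_apply_eq {α : Type*} {x₀ y : α} (hy : y ≠ x₀) :
    Nat.card {f : Pairings α // f.1 x₀ = y} = Nat.card (Pairings {z // ¬(z = x₀ ∨ z = y)}) := by
  rw [Nat.card_congr (Equiv.subtypeEquivRight fun f => f.2.apply_eq_iff_preserves_pair hy),
    card_pairings_preserving, card_pairings_of_card_eq_two (α := {z // z = x₀ ∨ z = y})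
      (Set.ncard_pair hy.symm), one_mul]

lemma card_pairings_of_isEmpty {α : Type*} [IsEmpty α] : Nat.card (Pairings α) = 1 :=
  Nat.card_eq_one_iff_unique.2
    ⟨⟨fun _ _ => Subtype.ext (funext isEmptyElim)⟩, ⟨⟨id, isEmptyElim, isEmptyElim⟩⟩⟩

theorem card_pairings {α : Type*} [Finite α] {n : ℕ} (hα : Nat.card α = 2 * n) :
    Nat.card (Pairings α) = (2 * n - 1)‼ := by
  induction n generalizing α with
  | zero =>
    have : IsEmpty α := Finite.card_eq_zero_iff.1 hα
    exact card_pairings_of_isEmpty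
  | succ n ih =>
    have := Fintype.ofFinite α
    obtain ⟨x₀⟩ : Nonempty α := Nat.card_pos_iff.1 (by omega) |>.1
    have fiber (y : α) (hy : y ≠ x₀) : Nat.card {f : Pairings α // f.1 x₀ = y} = (2 * n - 1)‼ := by
      rw [card_pairings_apply_eq hy]
      refine ih ?_
      have hsplit := Nat.card_subtype_add_card_subtype_not fun z => z = x₀ ∨ z = y
      have hpair : Nat.card {z // z = x₀ ∨ z = y} = 2 := Set.ncard_pair hy.symm
      omega
    have fiber_self : Nat.card {f : Pairings α // f.1 x₀ = x₀} = 0 :=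
      Finite.card_eq_zero_iff.2 ⟨fun f => f.1.2.2 x₀ f.2⟩
    rw [← Nat.card_congr (Equiv.sigmaFiberEquiv fun f : Pairings α => f.1 x₀), Nat.card_sigma,
      ← Finset.sum_erase (f := fun y => Nat.card {f : Pairings α // f.1 x₀ = y}) _ fiber_self,
      Finset.sum_congr rfl fun y hy => fiber y (Finset.ne_of_mem_erase hy),
      Finset.sum_const, Finset.card_erase_of_mem (Finset.mem_univ _), Finset.card_univ,
      ← Nat.card_eq_fintype_card, hα, smul_eq_mul, show 2 * (n + 1) - 1 = 2 * n + 1 by omega,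
      Nat.doubleFactorial_add_one]

lemma Nat.choose_mul_choose_le_choose_two_mul (m k : ℕ) :
    m.choose k * m.choose k ≤ (2 * m).choose (2 * k) := by
  rw [two_mul m, Nat.add_choose_eq]
  exact Finset.single_le_sum (f := fun p : ℕ × ℕ => m.choose p.1 * m.choose p.2)
    (fun _ _ => Nat.zero_le _) (a := (k, k))
    (Finset.HasAntidiagonal.mem_antidiagonal.2 (two_mul k).symm)

lemma Nat.factorial_two_mul (n : ℕ) : (2 * n)! = 2 ^ n * n ! * (2 * n - 1)‼ := by
  cases n with
  | zero => rfl
  | succ n =>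
    rw [show 2 * (n + 1) - 1 = 2 * n + 1 by omega, show 2 * (n + 1) = 2 * n + 1 + 1 by omega,
      Nat.factorial_eq_mul_doubleFactorial, show 2 * n + 1 + 1 = 2 * (n + 1) by omega,
      Nat.doubleFactorial_two_mul]

lemma Nat.choose_two_mul_mul_doubleFactorial {m k : ℕ} (hk : k ≤ m) :
    (2 * m).choose (2 * k) * ((2 * k - 1)‼ * (2 * (m - k) - 1)‼) = m.choose k * (2 * m - 1)‼ := by
  refine Nat.eq_of_mul_eq_mul_left (by positivity : 0 < 2 ^ m * (k ! * (m - k)!)) ?_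
  have hpow : 2 ^ m = 2 ^ k * 2 ^ (m - k) := by rw [← pow_add, Nat.add_sub_cancel' hk]
  calc 2 ^ m * (k ! * (m - k)!) * ((2 * m).choose (2 * k) * ((2 * k - 1)‼ * (2 * (m - k) - 1)‼))
      = (2 * m).choose (2 * k) * (2 * k)! * (2 * (m - k))! := by
        rw [Nat.factorial_two_mul, Nat.factorial_two_mul, hpow]; ring
    _ = (2 * m)! := by
        rw [Nat.mul_sub, Nat.choose_mul_factorial_mul_factorial (by omega)]
    _ = 2 ^ m * (k ! * (m - k)!) * (m.choose k * (2 * m - 1)‼) := by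
        rw [Nat.factorial_two_mul, ← Nat.choose_mul_factorial_mul_factorial hk]; ring

lemma Nat.choose_mul_doubleFactorial_le {m k : ℕ} (hk : k ≤ m) :
    m.choose k * ((2 * k - 1)‼ * (2 * (m - k) - 1)‼) ≤ (2 * m - 1)‼ := by
  refine Nat.le_of_mul_le_mul_left ?_ (Nat.choose_pos hk)
  calc m.choose k * (m.choose k * ((2 * k - 1)‼ * (2 * (m - k) - 1)‼))
      ≤ (2 * m).choose (2 * k) * ((2 * k - 1)‼ * (2 * (m - k) - 1)‼) := by
        rw [← mul_assoc]; gcongr; exact Nat.choose_mul_choose_le_choose_two_mul m k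
    _ = m.choose k * (2 * m - 1)‼ := Nat.choose_two_mul_mul_doubleFactorial hk

theorem configuration_model_no_boundary_edges_general
    {V H : Type*} [Fintype H] (att : H → V) (m : ℕ)
    (hH : Fintype.card H = 2 * m) (S : Finset V)
    (degS : ℕ) (hdeg : degS = (Finset.univ.filter (fun x : H => att x ∈ S)).card)
    (heven : Even degS) :
    ((Finset.univ.filter (fun f : {f : H → H // IsPairing f} =>
          ∀ x : H, att x ∈ S → att (f.1 x) ∈ S)).card : ℝ)
        / (Fintype.card {f : H → H // IsPairing f})
      ≤ ((m.choose (degS / 2) : ℝ))⁻¹ := by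
  obtain ⟨k, rfl⟩ := heven.two_dvd
  have hin : Nat.card {x // att x ∈ S} = 2 * k := by
    rw [hdeg, Nat.card_eq_fintype_card, Fintype.card_subtype]
  have hsplit := Nat.card_subtype_add_card_subtype_not fun x => att x ∈ S
  rw [hin, Nat.card_eq_fintype_card (α := H), hH] at hsplit
  have hkm : k ≤ m := by omega
  have hout : Nat.card {x // att x ∉ S} = 2 * (m - k) := by omega
  have hgood : (Finset.univ.filter (fun f : Pairings H => ∀ x, att x ∈ S → att (f.1 x) ∈ S)).card =
      (2 * k - 1)‼ * (2 * (m - k) - 1)‼ := by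
    rw [← Fintype.card_subtype, ← Nat.card_eq_fintype_card, card_pairings_preserving,
      card_pairings hin, card_pairings hout]
  have hall : Fintype.card (Pairings H) = (2 * m - 1)‼ := by
    rw [← Nat.card_eq_fintype_card, card_pairings (by rw [Nat.card_eq_fintype_card, hH])]
  rw [hgood, hall, Nat.mul_div_cancel_left k two_pos, div_le_iff₀ (by positivity), inv_mul_eq_div,
    le_div_iff₀ (by exact_mod_cast Nat.choose_pos hkm), mul_comm]
  exact_mod_cast Nat.choose_mul_doubleFactorial_le hkm

/-- Fountoulakis–Reed (Proposition 4.5): in the configuration model on a degree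
sequence with `2m` half-edges (attachment map `att : H → V`), for any vertex set
`S` with `deg_H(S)` even, the probability (i.e. the proportion of uniformly
random pairings of the half-edges) that no edge joins `S` to its complement is
at most `binom(m, deg_H(S)/2)⁻¹`. -/
theorem configuration_model_no_boundary_edges
    {V H : Type*} [Fintype V] [Fintype H] (att : H → V) (m : ℕ)
    (hH : Fintype.card H = 2 * m) (S : Finset V)
    (degS : ℕ) (hdeg : degS = (Finset.univ.filter (fun x : H => att x ∈ S)).card)
    (heven : Even degS) :
    ((Finset.univ.filter (fun f : {f : H → H // IsPairing f} =>
          ∀ x : H, att x ∈ S → att (f.1 x) ∈ S)).card : ℝ)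
        / (Fintype.card {f : H → H // IsPairing f})
      ≤ ((m.choose (degS / 2) : ℝ))⁻¹ :=
  configuration_model_no_boundary_edges_general att m hH S degS hdeg heven
end

section
/- Let q ≥ 2, let (C_G, w_G) be a polymer model on graph G satisfying the polymer sampling condition w_G(γ) ≤ e^{-τ·deg_G(V_γ)} with τ ≥ 3·log(8e³(q-1)). Then for every polymer γ ∈ C_G: ∑_{γ' incompatible with γ} |E_{γ'}| · w_G(γ') ≤ (1/e)·|E_γ|. -/
/-!
Splitting a connected vertex set `S ∋ u` into `u` and the components of `S \ {u}`, each attached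
to a neighbour of `u`, is injective and multiplicative for the weight `r ^ |S| * z ^ deg S`
(`deg S` the degree sum). Induction on `|S|` then bounds the total weight of connected sets through
`u` by `r * ∏_{a ∼ u} (1 + (weight through a)) ≤ r (e z) ^ deg u` as soon as `e r z ≤ 1`.
With `r = q - 1` (the spin assignments of a support) and `z = e ^ (1 - τ)` (which absorbs the
factor `|E_γ'| ≤ deg V_γ'` into `e ^ deg`), the polymers through a non-isolated vertex contribute
at most `(q - 1) e ^ (2 - τ)`. A polymer incompatible with `γ` that has an edge contains an
endpoint of an edge of `E_γ`, and there are at most `2 |E_γ|` of these; the bound on `τ` gives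
`2 (q - 1) e ^ (2 - τ) ≤ 1 / e`.
-/

open scoped Classical

open Finset Real

theorem Finset.sum_le_sum_sum_filter_of_cover {ι κ M : Type*} [AddCommMonoid M] [PartialOrder M]
    [IsOrderedAddMonoid M] {s : Finset ι} {t : Finset κ} {p : κ → ι → Prop}
    [∀ j, DecidablePred (p j)] {f : ι → M} (hf : ∀ i ∈ s, 0 ≤ f i)
    (hcover : ∀ i ∈ s, f i ≠ 0 → ∃ j ∈ t, p j i) :
    ∑ i ∈ s, f i ≤ ∑ j ∈ t, ∑ i ∈ s with p j i, f i :=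
  calc ∑ i ∈ s, f i ≤ ∑ i ∈ s, ∑ j ∈ t with p j i, f i := sum_le_sum fun i hi => by
        by_cases h : f i = 0
        · simp [h]
        obtain ⟨j, hj, hpj⟩ := hcover i hi h
        exact single_le_sum (f := fun _ => f i) (fun _ _ => hf i hi)
          (mem_filter.2 ⟨hj, hpj⟩)
    _ = ∑ j ∈ t, ∑ i ∈ s with p j i, f i := sum_comm' fun i j => by
        simp only [mem_filter]
        tauto

theorem natCast_mul_exp_neg_mul_le (n : ℕ) (τ : ℝ) : n * exp (-τ * n) ≤ exp (1 - τ) ^ n := by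
  rw [← exp_nat_mul, show n * (1 - τ) = n + -τ * n by ring, exp_add]
  gcongr
  linarith [add_one_le_exp (n : ℝ)]

theorem mul_exp_two_sub_le_of_three_mul_log_le {r τ : ℝ} (hr : 1 ≤ r)
    (hτ : 3 * log (8 * exp 3 * r) ≤ τ) :
    r * exp (2 - τ) ≤ 1 / (2 * exp 1) := by
  have h3 : 1 ≤ exp 3 := one_le_exp (by norm_num)
  have hlog : 0 ≤ log (8 * exp 3 * r) := log_nonneg (by nlinarith)
  have hτ' : 8 * exp 3 * r ≤ exp τ := by
    rw [← exp_log (by positivity : 0 < 8 * exp 3 * r)]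
    exact exp_le_exp.2 (by linarith)
  have hexp : r * exp (2 - τ) * (2 * exp 1) = 2 * exp 3 * r / exp τ := by
    rw [show (3 : ℝ) = 2 + 1 by norm_num, exp_add, exp_sub]
    field_simp
  rw [le_div_iff₀ (by positivity), hexp, div_le_one (exp_pos τ)]
  nlinarith

theorem card_filter_fst_eq_le {V κ : Type*} [DecidableEq V] [Fintype κ] (g : V → κ)
    (C : Finset (Finset V × (V → κ)))
    (hspin : ∀ γ ∈ C, (∀ v ∈ γ.1, γ.2 v ≠ g v) ∧ ∀ v ∉ γ.1, γ.2 v = g v) (S : Finset V) :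
    #{γ ∈ C | γ.1 = S} ≤ (Fintype.card κ - 1) ^ #S := by
  calc #{γ ∈ C | γ.1 = S}
      ≤ #(Fintype.piFinset fun v : S => univ.erase (g v)) := by
        refine card_le_card_of_injOn (fun γ v => γ.2 v) (fun γ hγ => ?_)
          fun γ hγ γ' hγ' h => ?_
        · obtain ⟨hC, rfl⟩ := mem_filter.1 hγ
          exact Fintype.mem_piFinset.2 fun v =>
            mem_erase.2 ⟨(hspin γ hC).1 v v.2, mem_univ _⟩
        · obtain ⟨hC, rfl⟩ := mem_filter.1 hγ
          obtain ⟨hC', hS⟩ := mem_filter.1 hγ'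
          refine Prod.ext hS.symm (funext fun v => ?_)
          by_cases hv : v ∈ γ.1
          · exact congrFun h ⟨v, hv⟩
          · rw [(hspin γ hC).2 v hv, (hspin γ' hC').2 v (hS ▸ hv)]
    _ = (Fintype.card κ - 1) ^ #S := by simp [Fintype.card_piFinset, card_erase_of_mem]

namespace SimpleGraph

variable {V : Type*} (G : SimpleGraph V)

def AdjIn (s : Finset V) (x y : V) : Prop := G.Adj x y ∧ x ∈ s ∧ y ∈ s

def ReachIn (s : Finset V) : V → V → Prop := Relation.ReflTransGen (G.AdjIn s)

def IsConnectedIn (s : Finset V) : Prop := ∀ a ∈ s, ∀ b ∈ s, G.ReachIn s a b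

noncomputable def componentIn (s : Finset V) (a : V) : Finset V := {b ∈ s | G.ReachIn s a b}

variable {G} {s S : Finset V} {a b c u v : V}

theorem ReachIn.symm (h : G.ReachIn s a b) : G.ReachIn s b a := by
  induction h with
  | refl => exact Relation.ReflTransGen.refl
  | tail _ hxy ih => exact Relation.ReflTransGen.head ⟨hxy.1.symm, hxy.2.2, hxy.2.1⟩ ih

theorem ReachIn.trans (h : G.ReachIn s a b) (h' : G.ReachIn s b c) : G.ReachIn s a c :=
  Relation.ReflTransGen.trans h h'

theorem ReachIn.mem_left (h : G.ReachIn s a b) (hb : b ∈ s) : a ∈ s := by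
  induction h with
  | refl => exact hb
  | tail _ hadj ih => exact ih hadj.2.1

theorem ReachIn.eq_of_forall_not_adj (h : G.ReachIn s a b) (ha : ∀ v, ¬G.Adj a v) : a = b := by
  rcases Relation.ReflTransGen.cases_head h with rfl | ⟨c, hac, -⟩
  · rfl
  · exact absurd hac.1 (ha c)

theorem mem_componentIn : b ∈ G.componentIn s a ↔ b ∈ s ∧ G.ReachIn s a b := by
  simp [componentIn]

theorem componentIn_subset : G.componentIn s a ⊆ s := filter_subset _ _

theorem mem_componentIn_self (ha : a ∈ s) : a ∈ G.componentIn s a :=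
  mem_componentIn.2 ⟨ha, Relation.ReflTransGen.refl⟩

theorem componentIn_eq (h : G.ReachIn s a b) : G.componentIn s a = G.componentIn s b := by
  ext c
  simp only [mem_componentIn]
  exact and_congr_right fun _ => ⟨h.symm.trans, h.trans⟩

theorem ReachIn.reachIn_componentIn (h : G.ReachIn s a b) :
    G.ReachIn (G.componentIn s a) a b := by
  induction h with
  | refl => exact Relation.ReflTransGen.refl
  | @tail x y hax hxy ih =>
    exact ih.tail
      ⟨hxy.1, mem_componentIn.2 ⟨hxy.2.1, hax⟩, mem_componentIn.2 ⟨hxy.2.2, hax.tail hxy⟩⟩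

theorem isConnectedIn_componentIn : G.IsConnectedIn (G.componentIn s a) := by
  intro b hb c hc
  exact (mem_componentIn.1 hb).2.reachIn_componentIn.symm.trans
    (mem_componentIn.1 hc).2.reachIn_componentIn

variable [DecidableEq V] in
theorem ReachIn.exists_adj_reachIn_erase (h : G.ReachIn s u b) (hb : b ≠ u) :
    ∃ a, G.Adj u a ∧ a ∈ s.erase u ∧ G.ReachIn (s.erase u) a b := by
  induction h with
  | refl => exact absurd rfl hb
  | @tail x y _ hxy ih =>
    have hy : y ∈ s.erase u := mem_erase.2 ⟨hb, hxy.2.2⟩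
    by_cases hx : x = u
    · subst hx
      exact ⟨y, hxy.1, hy, Relation.ReflTransGen.refl⟩
    · obtain ⟨a, hua, ha, hab⟩ := ih hx
      exact ⟨a, hua, ha, hab.tail ⟨hxy.1, mem_erase.2 ⟨hx, hxy.2.1⟩, hy⟩⟩

theorem isConnectedIn_of_connected_induce (h : (G.induce (s : Set V)).Connected) :
    G.IsConnectedIn s := by
  have key : ∀ x y : (s : Set V), (G.induce (s : Set V)).Walk x y → G.ReachIn s x y := by
    intro x y p
    induction p with
    | nil => exact Relation.ReflTransGen.refl
    | cons hadj _ ih => exact Relation.ReflTransGen.head ⟨hadj, by simp, by simp⟩ ih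
  intro a ha b hb
  exact key ⟨a, ha⟩ ⟨b, hb⟩ (h.preconnected ⟨a, ha⟩ ⟨b, hb⟩).some

theorem IsConnectedIn.eq_singleton (hs : G.IsConnectedIn s) (hu : u ∈ s)
    (hiso : ∀ v, ¬G.Adj u v) : s = {u} :=
  eq_singleton_iff_unique_mem.2 ⟨hu, fun v hv => ((hs u hu v hv).eq_of_forall_not_adj hiso).symm⟩

variable (G) in
noncomputable def branchRoot (u : V) (c : Finset V) : V :=
  @Classical.epsilon V ⟨u⟩ fun a => a ∈ c ∧ G.Adj u a

theorem branchRoot_spec {c : Finset V} (h : ∃ a ∈ c, G.Adj u a) :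
    G.branchRoot u c ∈ c ∧ G.Adj u (G.branchRoot u c) := by
  obtain ⟨a, hac, hua⟩ := h
  exact @Classical.epsilon_spec V (fun a => a ∈ c ∧ G.Adj u a) ⟨a, hac, hua⟩

variable [DecidableEq V]

variable (G) in
/-- The components of `S \ {u}`, each indexed by its root, a chosen neighbour of `u` in it; every
other vertex indexes the empty set. -/
noncomputable def branch (u : V) (S : Finset V) (a : V) : Finset V :=
  if G.branchRoot u (G.componentIn (S.erase u) a) = a then G.componentIn (S.erase u) a else ∅

theorem mem_branch :
    c ∈ G.branch u S a ↔ c ∈ S.erase u ∧ G.ReachIn (S.erase u) a c ∧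
      G.branchRoot u (G.componentIn (S.erase u) c) = a := by
  unfold branch
  split_ifs with hroot
  · rw [mem_componentIn]
    exact ⟨fun h => ⟨h.1, h.2, componentIn_eq h.2 ▸ hroot⟩, fun h => ⟨h.1, h.2.1⟩⟩
  · simp only [notMem_empty, false_iff]
    exact fun h => hroot (componentIn_eq h.2.1 ▸ h.2.2)

theorem branch_subset : G.branch u S a ⊆ S.erase u := fun _ hc => (mem_branch.1 hc).1

theorem disjoint_branch (hab : a ≠ b) : Disjoint (G.branch u S a) (G.branch u S b) :=
  Finset.disjoint_left.2 fun _ hca hcb =>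
    hab ((mem_branch.1 hca).2.2.symm.trans (mem_branch.1 hcb).2.2)

theorem branch_eq_componentIn (hb : b ∈ G.branch u S a) :
    G.branch u S a = G.componentIn (S.erase u) a := by
  ext c
  rw [mem_branch, mem_componentIn]
  refine ⟨fun h => ⟨h.1, h.2.1⟩, fun h => ⟨h.1, h.2, ?_⟩⟩
  rw [← componentIn_eq h.2, componentIn_eq (mem_branch.1 hb).2.1, (mem_branch.1 hb).2.2]

variable [Fintype V]

theorem IsConnectedIn.biUnion_branch (hS : G.IsConnectedIn S) (hu : u ∈ S) :
    (G.neighborFinset u).biUnion (G.branch u S) = S.erase u := by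
  refine Subset.antisymm (biUnion_subset.2 fun _ _ => branch_subset) fun c hc => ?_
  obtain ⟨a₀, hua₀, ha₀, ha₀c⟩ :=
    (hS u hu c (mem_of_mem_erase hc)).exists_adj_reachIn_erase (ne_of_mem_erase hc)
  obtain ⟨hroot, huroot⟩ := branchRoot_spec ⟨a₀, mem_componentIn.2 ⟨ha₀, ha₀c.symm⟩, hua₀⟩
  exact mem_biUnion.2 ⟨_, (mem_neighborFinset _ _ _).2 huroot,
    mem_branch.2 ⟨hc, (mem_componentIn.1 hroot).2.symm, rfl⟩⟩

theorem IsConnectedIn.sum_eq_add_sum_branch {M : Type*} [AddCommMonoid M]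
    (hS : G.IsConnectedIn S) (hu : u ∈ S) (f : V → M) :
    ∑ v ∈ S, f v = f u + ∑ a ∈ G.neighborFinset u, ∑ v ∈ G.branch u S a, f v := by
  rw [← add_sum_erase S f hu, ← hS.biUnion_branch hu,
    sum_biUnion fun _ _ _ _ hab => disjoint_branch hab]

theorem IsConnectedIn.eq_of_branch_eq {T : Finset V} (hS : G.IsConnectedIn S) (huS : u ∈ S)
    (hT : G.IsConnectedIn T) (huT : u ∈ T)
    (h : ∀ a ∈ G.neighborFinset u, G.branch u S a = G.branch u T a) : S = T := by
  rw [← insert_erase huS, ← insert_erase huT, ← hS.biUnion_branch huS, ← hT.biUnion_branch huT,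
    biUnion_congr rfl h]

variable (G) in
noncomputable def degSum (s : Finset V) : ℕ := ∑ v ∈ s, G.degree v

variable (G) in
noncomputable def connectedSetsOfCardLE (u : V) (k : ℕ) : Finset (Finset V) :=
  {S | u ∈ S ∧ #S ≤ k ∧ G.IsConnectedIn S}

theorem mem_connectedSetsOfCardLE {k : ℕ} :
    S ∈ G.connectedSetsOfCardLE u k ↔ u ∈ S ∧ #S ≤ k ∧ G.IsConnectedIn S := by
  simp [connectedSetsOfCardLE]

theorem branch_mem_connectedSetsOfCardLE {k : ℕ} (hu : u ∈ S) (hS : #S ≤ k + 1) (a : V) :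
    G.branch u S a ∈ insert ∅ (G.connectedSetsOfCardLE a k) := by
  rcases eq_empty_or_nonempty (G.branch u S a) with h | ⟨b, hb⟩
  · exact h ▸ mem_insert_self _ _
  have ha : a ∈ S.erase u := (mem_branch.1 hb).2.1.mem_left (mem_branch.1 hb).1
  rw [branch_eq_componentIn hb]
  refine mem_insert_of_mem (mem_connectedSetsOfCardLE.2
    ⟨mem_componentIn_self ha, ?_, isConnectedIn_componentIn⟩)
  calc #(G.componentIn (S.erase u) a) ≤ #(S.erase u) := card_le_card componentIn_subset
    _ ≤ k := by rw [card_erase_of_mem hu]; omega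

theorem IsConnectedIn.pow_card_mul_pow_degSum {R : Type*} [CommMonoid R]
    (hS : G.IsConnectedIn S) (hu : u ∈ S) (r z : R) :
    r ^ #S * z ^ G.degSum S = r * z ^ G.degree u *
      ∏ a ∈ G.neighborFinset u, r ^ #(G.branch u S a) * z ^ G.degSum (G.branch u S a) := by
  have hcard : #S = 1 + ∑ a ∈ G.neighborFinset u, #(G.branch u S a) := by
    simpa only [card_eq_sum_ones] using hS.sum_eq_add_sum_branch hu fun _ => 1
  have hdeg : G.degSum S = G.degree u + ∑ a ∈ G.neighborFinset u, G.degSum (G.branch u S a) :=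
    hS.sum_eq_add_sum_branch hu _
  rw [hcard, hdeg, pow_add, pow_add, pow_one, ← prod_pow_eq_pow_sum, ← prod_pow_eq_pow_sum,
    prod_mul_distrib, mul_mul_mul_comm]

theorem sum_connectedSetsOfCardLE_le {r z : ℝ} (hr : 1 ≤ r) (hz : 0 ≤ z)
    (hrz : exp 1 * r * z ≤ 1) (u : V) (k : ℕ) :
    ∑ S ∈ G.connectedSetsOfCardLE u k, r ^ #S * z ^ G.degSum S ≤
      r * (exp 1 * z) ^ G.degree u := by
  induction k generalizing u with
  | zero =>
    rw [sum_eq_zero fun S hS => ?_]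
    · positivity
    obtain ⟨hu, hcard, -⟩ := mem_connectedSetsOfCardLE.1 hS
    exact absurd (card_pos.2 ⟨u, hu⟩) (by omega)
  | succ k ih =>
    set F : Finset V → ℝ := fun S => r ^ #S * z ^ G.degSum S
    have hF : ∀ S, 0 ≤ F S := fun S => by positivity
    have hneighbor : ∀ a ∈ G.neighborFinset u,
        ∑ S ∈ insert ∅ (G.connectedSetsOfCardLE a k), F S ≤ exp 1 := by
      intro a ha
      have hempty : ∅ ∉ G.connectedSetsOfCardLE a k :=
        fun h => notMem_empty a (mem_connectedSetsOfCardLE.1 h).1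
      have hdeg : G.degree a ≠ 0 :=
        ((G.degree_pos_iff_exists_adj a).2 ⟨u, ((G.mem_neighborFinset u a).1 ha).symm⟩).ne'
      have hez : exp 1 * z ≤ 1 := le_trans (by nlinarith [mul_nonneg (exp_pos 1).le hz]) hrz
      have hF0 : F ∅ = 1 := by simp [F, degSum]
      rw [sum_insert hempty, hF0]
      calc 1 + ∑ S ∈ G.connectedSetsOfCardLE a k, F S ≤ 1 + exp 1 * r * z := by
            have := (ih a).trans
              (mul_le_mul_of_nonneg_left (pow_le_of_le_one (by positivity) hez hdeg) (by linarith))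
            linarith
        _ ≤ exp (exp 1 * r * z) := by linarith [add_one_le_exp (exp 1 * r * z)]
        _ ≤ exp 1 := exp_le_exp.2 hrz
    calc ∑ S ∈ G.connectedSetsOfCardLE u (k + 1), F S
        = ∑ S ∈ G.connectedSetsOfCardLE u (k + 1),
            r * z ^ G.degree u * ∏ a : G.neighborFinset u, F (G.branch u S a) := by
          refine sum_congr rfl fun S hS => ?_
          obtain ⟨hu, -, hS⟩ := mem_connectedSetsOfCardLE.1 hS
          rw [prod_coe_sort (G.neighborFinset u) fun a => F (G.branch u S a)]
          exact hS.pow_card_mul_pow_degSum hu r z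
      _ = r * z ^ G.degree u * ∑ p ∈ (G.connectedSetsOfCardLE u (k + 1)).image
            (fun S (a : G.neighborFinset u) => G.branch u S a), ∏ a, F (p a) := by
          rw [mul_sum, sum_image]
          intro S hS T hT h
          obtain ⟨huS, -, hS⟩ := mem_connectedSetsOfCardLE.1 hS
          obtain ⟨huT, -, hT⟩ := mem_connectedSetsOfCardLE.1 hT
          exact hS.eq_of_branch_eq huS hT huT fun a ha => congrFun h ⟨a, ha⟩
      _ ≤ r * z ^ G.degree u * ∑ p ∈ Fintype.piFinset fun a : G.neighborFinset u =>
            insert ∅ (G.connectedSetsOfCardLE a k), ∏ a, F (p a) := by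
          refine mul_le_mul_of_nonneg_left (sum_le_sum_of_subset_of_nonneg ?_
            fun p _ _ => prod_nonneg fun a _ => hF _) (by positivity)
          intro p hp
          obtain ⟨S, hS, rfl⟩ := mem_image.1 hp
          obtain ⟨hu, hcard, -⟩ := mem_connectedSetsOfCardLE.1 hS
          exact Fintype.mem_piFinset.2 fun a => branch_mem_connectedSetsOfCardLE hu hcard a
      _ = r * z ^ G.degree u * ∏ a : G.neighborFinset u,
            ∑ S ∈ insert ∅ (G.connectedSetsOfCardLE a k), F S := by
          rw [prod_univ_sum]
      _ ≤ r * z ^ G.degree u * ∏ _a : G.neighborFinset u, exp 1 := by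
          gcongr with a
          exact hneighbor a a.2
      _ = r * (exp 1 * z) ^ G.degree u := by
          rw [prod_const, card_univ, Fintype.card_coe, card_neighborFinset_eq_degree]
          ring

variable (G) in
noncomputable def incidentEdges (s : Finset V) : Finset (Sym2 V) :=
  {e ∈ G.edgeFinset | ∃ v ∈ s, v ∈ e}

variable (G) in
noncomputable def incidentEdgeVerts (s : Finset V) : Finset V :=
  (G.incidentEdges s).biUnion Sym2.toFinset

theorem card_incidentEdges_le_degSum (s : Finset V) : #(G.incidentEdges s) ≤ G.degSum s :=
  calc #(G.incidentEdges s) ≤ #(s.biUnion fun v => G.incidenceFinset v) :=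
        card_le_card fun e he => by
        obtain ⟨he, v, hv, hve⟩ := mem_filter.1 he
        exact mem_biUnion.2 ⟨v, hv, (G.mem_incidenceFinset v e).2 ⟨mem_edgeFinset.1 he, hve⟩⟩
    _ ≤ ∑ v ∈ s, #(G.incidenceFinset v) := card_biUnion_le
    _ = G.degSum s := sum_congr rfl fun v _ => G.card_incidenceFinset_eq_degree v

theorem card_incidentEdgeVerts_le (s : Finset V) :
    #(G.incidentEdgeVerts s) ≤ 2 * #(G.incidentEdges s) := by
  rw [mul_comm]
  exact card_biUnion_le_card_mul _ _ 2 fun e _ => by rw [Sym2.card_toFinset]; split <;> omega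

theorem mem_incidentEdgeVerts_of_adj (h : G.Adj u v) (hs : u ∈ s ∨ v ∈ s) :
    v ∈ G.incidentEdgeVerts s := by
  refine mem_biUnion.2 ⟨s(u, v), mem_filter.2 ⟨mem_edgeFinset.2 h, ?_⟩, by simp⟩
  rcases hs with hu | hv
  exacts [⟨u, hu, Sym2.mem_mk_left u v⟩, ⟨v, hv, Sym2.mem_mk_right u v⟩]

theorem degree_pos_of_mem_incidentEdgeVerts (hv : v ∈ G.incidentEdgeVerts s) :
    0 < G.degree v := by
  obtain ⟨e, he, hve⟩ := mem_biUnion.1 hv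
  rw [← card_incidenceFinset_eq_degree]
  exact card_pos.2 ⟨e, (G.mem_incidenceFinset v e).2
    ⟨mem_edgeFinset.1 (mem_filter.1 he).1, Sym2.mem_toFinset.1 hve⟩⟩

section Polymer

variable {κ : Type*} {C : Finset (Finset V × (V → κ))} {w : Finset V × (V → κ) → ℝ}

theorem sum_polymers_incompatible_le (hconn : ∀ γ ∈ C, (G.induce (γ.1 : Set V)).Connected)
    (hw0 : ∀ γ ∈ C, 0 ≤ w γ) (A : Finset V) :
    ∑ γ ∈ C with ∃ u ∈ A, ∃ u' ∈ γ.1, u = u' ∨ G.Adj u u', (#(G.incidentEdges γ.1) : ℝ) * w γ ≤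
      ∑ b ∈ G.incidentEdgeVerts A, ∑ γ ∈ C with b ∈ γ.1, (#(G.incidentEdges γ.1) : ℝ) * w γ := by
  have hf : ∀ γ ∈ C, 0 ≤ (#(G.incidentEdges γ.1) : ℝ) * w γ :=
    fun γ hC => mul_nonneg (Nat.cast_nonneg _) (hw0 γ hC)
  refine (sum_le_sum_sum_filter_of_cover (fun γ hγ => hf γ (mem_filter.1 hγ).1)
    fun γ hγ hne => ?_).trans (sum_le_sum fun b _ => sum_le_sum_of_subset_of_nonneg
      (filter_subset_filter _ (filter_subset _ _)) fun γ hγ _ => hf γ (mem_filter.1 hγ).1)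
  obtain ⟨hC, u, hu, u', hu', rfl | hadj⟩ := mem_filter.1 hγ
  · by_cases hdeg : 0 < G.degree u
    · obtain ⟨v, huv⟩ := (G.degree_pos_iff_exists_adj u).1 hdeg
      exact ⟨u, mem_incidentEdgeVerts_of_adj huv.symm (Or.inr hu), hu'⟩
    · -- an isolated vertex is a whole polymer, and one without edges
      have hγu : γ.1 = {u} := (isConnectedIn_of_connected_induce (hconn γ hC)).eq_singleton hu'
        fun v huv => hdeg ((G.degree_pos_iff_exists_adj u).2 ⟨v, huv⟩)
      have hedges : #(G.incidentEdges γ.1) = 0 := by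
        have h := card_incidentEdges_le_degSum (G := G) γ.1
        rw [hγu, degSum, sum_singleton, Nat.eq_zero_of_not_pos hdeg] at h
        rw [hγu]
        omega
      exact absurd (by rw [hedges, Nat.cast_zero, zero_mul]) hne
  · exact ⟨u', mem_incidentEdgeVerts_of_adj hadj (Or.inl hu), hu'⟩

variable [Fintype κ] {g : V → κ} {τ : ℝ}

theorem sum_polymers_support_eq_le
    (hspin : ∀ γ ∈ C, (∀ v ∈ γ.1, γ.2 v ≠ g v) ∧ ∀ v ∉ γ.1, γ.2 v = g v)
    (hw0 : ∀ γ ∈ C, 0 ≤ w γ) (hsamp : ∀ γ ∈ C, w γ ≤ exp (-τ * G.degSum γ.1)) (S : Finset V) :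
    ∑ γ ∈ C with γ.1 = S, (#(G.incidentEdges γ.1) : ℝ) * w γ ≤
      ((Fintype.card κ - 1 : ℕ) : ℝ) ^ #S * exp (1 - τ) ^ G.degSum S := by
  have hterm : ∀ γ ∈ {γ ∈ C | γ.1 = S},
      (#(G.incidentEdges γ.1) : ℝ) * w γ ≤ exp (1 - τ) ^ G.degSum S := by
    intro γ hγ
    obtain ⟨hC, rfl⟩ := mem_filter.1 hγ
    calc (#(G.incidentEdges γ.1) : ℝ) * w γ ≤ G.degSum γ.1 * exp (-τ * G.degSum γ.1) :=
          mul_le_mul (mod_cast card_incidentEdges_le_degSum _) (hsamp γ hC) (hw0 γ hC)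
            (Nat.cast_nonneg _)
      _ ≤ exp (1 - τ) ^ G.degSum γ.1 := natCast_mul_exp_neg_mul_le _ _
  calc _ ≤ #{γ ∈ C | γ.1 = S} • exp (1 - τ) ^ G.degSum S := sum_le_card_nsmul _ _ _ hterm
    _ ≤ _ := by
      rw [nsmul_eq_mul]
      gcongr
      exact_mod_cast card_filter_fst_eq_le g C hspin S

theorem sum_polymers_containing_le (hκ : 2 ≤ Fintype.card κ)
    (hconn : ∀ γ ∈ C, (G.induce (γ.1 : Set V)).Connected)
    (hspin : ∀ γ ∈ C, (∀ v ∈ γ.1, γ.2 v ≠ g v) ∧ ∀ v ∉ γ.1, γ.2 v = g v)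
    (hw0 : ∀ γ ∈ C, 0 ≤ w γ) (hsamp : ∀ γ ∈ C, w γ ≤ exp (-τ * G.degSum γ.1))
    (hτ : ((Fintype.card κ : ℝ) - 1) * exp (2 - τ) ≤ 1) (hu : 0 < G.degree u) :
    ∑ γ ∈ C with u ∈ γ.1, (#(G.incidentEdges γ.1) : ℝ) * w γ ≤
      ((Fintype.card κ : ℝ) - 1) * exp (2 - τ) := by
  set r : ℝ := (Fintype.card κ : ℝ) - 1
  have hr' : ((Fintype.card κ - 1 : ℕ) : ℝ) = r := by rw [Nat.cast_sub (by omega), Nat.cast_one]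
  have hr : 1 ≤ r := by
    have : (2 : ℝ) ≤ Fintype.card κ := by exact_mod_cast hκ
    linarith
  have hexp : exp 1 * exp (1 - τ) = exp (2 - τ) := by rw [← exp_add]; ring_nf
  have hmaps : ∀ γ ∈ {γ ∈ C | u ∈ γ.1}, γ.1 ∈ G.connectedSetsOfCardLE u (Fintype.card V) := by
    intro γ hγ
    obtain ⟨hC, hu⟩ := mem_filter.1 hγ
    exact mem_connectedSetsOfCardLE.2
      ⟨hu, card_le_univ _, isConnectedIn_of_connected_induce (hconn γ hC)⟩
  calc ∑ γ ∈ C with u ∈ γ.1, (#(G.incidentEdges γ.1) : ℝ) * w γ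
      = ∑ S ∈ G.connectedSetsOfCardLE u (Fintype.card V),
          ∑ γ ∈ {γ ∈ C | u ∈ γ.1} with γ.1 = S, (#(G.incidentEdges γ.1) : ℝ) * w γ :=
        (sum_fiberwise_of_maps_to hmaps _).symm
    _ ≤ ∑ S ∈ G.connectedSetsOfCardLE u (Fintype.card V), r ^ #S * exp (1 - τ) ^ G.degSum S :=
        sum_le_sum fun S _ => (sum_le_sum_of_subset_of_nonneg
          (filter_subset_filter _ (filter_subset _ _)) fun γ hγ _ =>
            mul_nonneg (Nat.cast_nonneg _) (hw0 γ (mem_filter.1 hγ).1)).trans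
          (hr' ▸ sum_polymers_support_eq_le hspin hw0 hsamp S)
    _ ≤ r * (exp 1 * exp (1 - τ)) ^ G.degree u :=
        sum_connectedSetsOfCardLE_le hr (exp_pos _).le
          (by rwa [mul_right_comm, hexp, mul_comm]) u _
    _ ≤ r * exp (2 - τ) := by
        rw [hexp]
        gcongr
        exact pow_le_of_le_one (exp_pos _).le (le_trans (by nlinarith [exp_pos (2 - τ)]) hτ)
          hu.ne'

end Polymer

end SimpleGraph

open SimpleGraph in
/-- The polymer sampling condition implies the polymer mixing condition with
constant `θ = 1/e`. A polymer is a pair `γ = (V_γ, σ_γ)` of a nonempty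
connected vertex set together with a spin assignment avoiding the ground spin
`g v` at each `v ∈ V_γ` (and normalised to `g` off `V_γ`); `E_γ` is the set of
edges with at least one endpoint in `V_γ`; `γ' ≁ γ` iff some vertex of `γ'` is
within distance 1 of a vertex of `γ`. If `w(γ) ≤ e^{-τ deg_G(V_γ)}` for all
allowed polymers, with `τ ≥ 3 log(8e³(q-1))`, then for every allowed `γ`,
`∑_{γ' ≁ γ} |E_{γ'}| w(γ') ≤ (1/e)|E_γ|`. -/
theorem polymer_sampling_implies_mixing
    {V : Type*} [Fintype V] [DecidableEq V] (G : SimpleGraph V)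
    (q : ℕ) (hq : 2 ≤ q) (g : V → Fin q)
    (C : Finset (Finset V × (V → Fin q)))
    (hvalid : ∀ γ ∈ C, γ.1.Nonempty ∧ (G.induce (γ.1 : Set V)).Connected ∧
      (∀ v ∈ γ.1, γ.2 v ≠ g v) ∧ (∀ v ∉ γ.1, γ.2 v = g v))
    (w : Finset V × (V → Fin q) → ℝ)
    (hw0 : ∀ γ ∈ C, 0 ≤ w γ)
    (τ : ℝ) (hτ : 3 * Real.log (8 * Real.exp 3 * ((q : ℝ) - 1)) ≤ τ)
    (hsamp : ∀ γ ∈ C, w γ ≤ Real.exp (-τ * (∑ v ∈ γ.1, G.degree v : ℝ))) :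
    ∀ γ ∈ C,
      ∑ γ' ∈ C.filter (fun γ' => ∃ u ∈ γ.1, ∃ u' ∈ γ'.1, u = u' ∨ G.Adj u u'),
          ((G.edgeFinset.filter (fun e => ∃ v ∈ γ'.1, v ∈ e)).card : ℝ) * w γ'
        ≤ (1 / Real.exp 1) *
          ((G.edgeFinset.filter (fun e => ∃ v ∈ γ.1, v ∈ e)).card : ℝ) := by
  intro γ _
  have hconn : ∀ γ ∈ C, (G.induce (γ.1 : Set V)).Connected := fun γ hγ => (hvalid γ hγ).2.1
  have hq1 : (1 : ℝ) ≤ q - 1 := by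
    have : (2 : ℝ) ≤ q := by exact_mod_cast hq
    linarith
  have hc : ((q : ℝ) - 1) * exp (2 - τ) ≤ 1 / (2 * exp 1) :=
    mul_exp_two_sub_le_of_three_mul_log_le hq1 hτ
  have hc1 : ((q : ℝ) - 1) * exp (2 - τ) ≤ 1 :=
    hc.trans (by rw [div_le_one (by positivity)]; linarith [add_one_le_exp 1])
  have hvertex : ∀ b ∈ G.incidentEdgeVerts γ.1,
      ∑ γ' ∈ C with b ∈ γ'.1, (#(G.incidentEdges γ'.1) : ℝ) * w γ' ≤ (q - 1) * exp (2 - τ) :=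
    fun b hb => by
      simpa using sum_polymers_containing_le (by simpa) hconn (fun γ hγ => (hvalid γ hγ).2.2)
        hw0 (fun γ hγ => by simpa [degSum] using hsamp γ hγ) (by simpa using hc1)
        (degree_pos_of_mem_incidentEdgeVerts hb)
  calc _ ≤ ∑ b ∈ G.incidentEdgeVerts γ.1, ∑ γ' ∈ C with b ∈ γ'.1,
          (#(G.incidentEdges γ'.1) : ℝ) * w γ' := sum_polymers_incompatible_le hconn hw0 γ.1
    _ ≤ #(G.incidentEdgeVerts γ.1) * ((q - 1) * exp (2 - τ)) := by
        simpa using sum_le_card_nsmul _ _ _ hvertex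
    _ ≤ (2 * #(G.incidentEdges γ.1)) * (1 / (2 * exp 1)) :=
        mul_le_mul (mod_cast card_incidentEdgeVerts_le _) hc
          (mul_nonneg (by linarith) (exp_pos _).le) (by positivity)
    _ = _ := by
        unfold incidentEdges
        field_simp
end

section
/- Let μ be the Gibbs distribution of a polymer model on graph G with m edges, and consider the polymer dynamics Markov chain (pick a uniformly random edge e; with prob. 1/2 remove the unique polymer γ_e containing an endpoint of e if any; with prob. 1/2 sample γ from ν_e and add it if compatible, where ν_e(γ) = w_G(γ) for γ with e ∈ E_γ). Then μ satisfies detailed balance for this chain, and the chain is irreducible and aperiodic; hence μ is its unique stationary distribution. -/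
/-!
Adding `γ` to `Γ ∖ {γ}` and removing it again happen at rates `|E_γ| w(γ) / 2m` and
`|E_γ| / 2m`, whose ratio is `μ(Γ) / μ(Γ ∖ {γ})`: this is detailed balance. Every
configuration is joined to `∅` by removals, so the chain is irreducible. It is also lazy,
`P(Γ, Γ) ≥ 1/2`: an edge `e` covered by a polymer of `Γ` lies in no polymer that can be added,
and otherwise the addable polymers through `e` have total weight at most `ν_e ≤ 1`, so each edge
carries at most `1 / 2m` of the off-diagonal mass of a row. Finally, for a reversible
irreducible chain `π / μ` is harmonic for any stationary `π`, hence constant by the maximum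
principle.
-/

open scoped Classical

noncomputable section

namespace Matrix

open Relation

variable {n : Type*} [Fintype n] {P : Matrix n n ℝ}

theorem vecMul_eq_of_detailedBalance (hrow : ∀ i, ∑ j, P i j = 1) {μ : n → ℝ}
    (hDB : ∀ i j, μ i * P i j = μ j * P j i) : μ ᵥ* P = μ := by
  funext j
  simp only [vecMul, dotProduct]
  rw [Finset.sum_congr rfl fun i _ => hDB i j, ← Finset.mul_sum, hrow, mul_one]

variable [DecidableEq n]

theorem exists_pow_apply_pos_of_reflTransGen (hP : ∀ i j, 0 ≤ P i j) {i j : n}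
    (h : ReflTransGen (fun a b => 0 < P a b) i j) : ∃ k, 0 < (P ^ k) i j := by
  induction h with
  | refl => exact ⟨0, by simp⟩
  | @tail b c _ hbc ih =>
    obtain ⟨k, hk⟩ := ih
    refine ⟨k + 1, ?_⟩
    rw [pow_succ, mul_apply]
    exact Finset.sum_pos' (fun x _ => mul_nonneg (pow_apply_nonneg hP k i x) (hP x c))
      ⟨b, Finset.mem_univ b, mul_pos hk hbc⟩

theorem apply_eq_of_reflTransGen_of_mulVec_eq (hP : P ∈ rowStochastic ℝ n) {f : n → ℝ}
    (hf : P *ᵥ f = f) {i j : n} (hmax : ∀ k, f k ≤ f i)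
    (h : ReflTransGen (fun a b => 0 < P a b) i j) : f j = f i := by
  induction h with
  | refl => rfl
  | @tail b c _ hbc ih =>
    refine le_antisymm (hmax c) (not_lt.1 fun hlt => lt_irrefl (f i) ?_)
    calc f i = (P *ᵥ f) b := by rw [hf, ih]
      _ = ∑ x, P b x * f x := rfl
      _ < ∑ x, P b x * f i :=
        Finset.sum_lt_sum (fun x _ => mul_le_mul_of_nonneg_left (hmax x) (hP.1 b x))
          ⟨c, Finset.mem_univ c, mul_lt_mul_of_pos_left hlt hbc⟩
      _ = f i := by rw [← Finset.sum_mul, sum_row_of_mem_rowStochastic hP, one_mul]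

theorem apply_eq_apply_of_mulVec_eq (hP : P ∈ rowStochastic ℝ n)
    (hirr : ∀ i j, ReflTransGen (fun a b => 0 < P a b) i j) {f : n → ℝ} (hf : P *ᵥ f = f)
    (i j : n) : f i = f j := by
  have : Nonempty n := ⟨i⟩
  obtain ⟨x, hx⟩ := Finite.exists_max f
  rw [apply_eq_of_reflTransGen_of_mulVec_eq hP hf hx (hirr x i),
    apply_eq_of_reflTransGen_of_mulVec_eq hP hf hx (hirr x j)]

theorem eq_of_vecMul_eq_of_detailedBalance (hP : P ∈ rowStochastic ℝ n)
    (hirr : ∀ i j, ReflTransGen (fun a b => 0 < P a b) i j) {μ π : n → ℝ}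
    (hμ : ∀ i, 0 < μ i) (hDB : ∀ i j, μ i * P i j = μ j * P j i) (hμ1 : ∑ i, μ i = 1)
    (hπ : π ᵥ* P = π) (hπ1 : ∑ i, π i = 1) : π = μ := by
  have harmonic : P *ᵥ (π / μ) = π / μ := by
    funext i
    apply mul_left_cancel₀ (hμ i).ne'
    calc μ i * (P *ᵥ (π / μ)) i = ∑ j, π j * P j i := by
          simp only [mulVec, dotProduct, Finset.mul_sum]
          refine Finset.sum_congr rfl fun j _ => ?_
          rw [← mul_assoc, hDB, Pi.div_apply]
          field_simp [(hμ j).ne']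
      _ = π i := congrFun hπ i
      _ = μ i * (π / μ) i := by rw [Pi.div_apply]; field_simp [(hμ i).ne']
  funext i
  have hprop : ∀ j, π j = π i / μ i * μ j := fun j => by
    have := apply_eq_apply_of_mulVec_eq hP hirr harmonic j i
    rw [Pi.div_apply, Pi.div_apply, div_eq_iff (hμ j).ne'] at this
    exact this
  have : π i / μ i = 1 := by
    rw [← hπ1, Finset.sum_congr rfl fun j _ => hprop j, ← Finset.mul_sum, hμ1, mul_one]
  rwa [div_eq_one_iff_eq (hμ i).ne'] at this

end Matrix

namespace Finset

variable {α : Type*} [DecidableEq α]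

theorem exists_notMem_insert_iff {s t : Finset α} :
    (∃ a ∉ s, t = insert a s) ↔ ∃ a ∈ t, s = t.erase a := by
  constructor
  · rintro ⟨a, ha, rfl⟩
    exact ⟨a, mem_insert_self a s, (erase_insert ha).symm⟩
  · rintro ⟨a, ha, rfl⟩
    exact ⟨a, notMem_erase a t, (insert_erase ha).symm⟩

theorem symmDiff_singleton_of_mem {s : Finset α} {a : α}
    (h : a ∈ s) : symmDiff s {a} = s.erase a := by
  ext x
  by_cases hx : x = a <;> simp [mem_symmDiff, hx, h]

theorem symmDiff_singleton_of_notMem {s : Finset α} {a : α}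
    (h : a ∉ s) : symmDiff s {a} = insert a s := by
  ext x
  by_cases hx : x = a <;> simp [mem_symmDiff, hx, h]

end Finset

namespace PolymerDynamics

section Configurations

open Relation

variable {Pol : Type*}

def ValidConfig (compat : Pol → Pol → Prop) (Γ : Finset Pol) : Prop :=
  ∀ γ ∈ Γ, ∀ γ' ∈ Γ, γ ≠ γ' → compat γ γ'

variable {compat : Pol → Pol → Prop}

abbrev Config (compat : Pol → Pol → Prop) := {Γ : Finset Pol // ValidConfig compat Γ}

theorem ValidConfig.mono {s t : Finset Pol} (ht : ValidConfig compat t) (hst : s ⊆ t) :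
    ValidConfig compat s :=
  fun γ hγ γ' hγ' => ht γ (hst hγ) γ' (hst hγ')

theorem validConfig_empty : ValidConfig compat (∅ : Finset Pol) := by
  simp [ValidConfig]

variable [DecidableEq Pol]

theorem reflTransGen_empty_of_erase {R : Config compat → Config compat → Prop}
    (hR : ∀ Γ Γ' : Config compat, ∀ γ ∈ Γ.1, Γ'.1 = Γ.1.erase γ → R Γ Γ') (Γ : Config compat) :
    ReflTransGen R Γ ⟨∅, validConfig_empty⟩ := by
  induction hn : Γ.1.card generalizing Γ with
  | zero =>
    rw [show Γ = ⟨∅, validConfig_empty⟩ from Subtype.ext (Finset.card_eq_zero.1 hn)]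
  | succ k ih =>
    obtain ⟨γ, hγ⟩ := Finset.card_pos.1 (by omega : 0 < Γ.1.card)
    let Γ' : Config compat := ⟨Γ.1.erase γ, Γ.2.mono (Finset.erase_subset γ Γ.1)⟩
    exact ReflTransGen.head (hR Γ Γ' γ hγ rfl)
      (ih Γ' (by simp [Γ', Finset.card_erase_of_mem hγ, hn]))

theorem reflTransGen_of_erase {R : Config compat → Config compat → Prop}
    (hR : ∀ Γ Γ' : Config compat, ∀ γ ∈ Γ.1, Γ'.1 = Γ.1.erase γ → R Γ Γ' ∧ R Γ' Γ)
    (Γ Γ' : Config compat) : ReflTransGen R Γ Γ' :=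
  (reflTransGen_empty_of_erase (fun Γ Γ' γ hγ h => (hR Γ Γ' γ hγ h).1) Γ).trans
    (reflTransGen_swap.1
      (reflTransGen_empty_of_erase (fun Γ Γ' γ hγ h => (hR Γ Γ' γ hγ h).2) Γ'))

end Configurations

section Dynamics

open Relation

variable {Pol Edge : Type*} [DecidableEq Pol]

structure IsPolymerDynamics (compat : Pol → Pol → Prop) (w : Pol → ℝ) (Eγ : Pol → Finset Edge)
    (m : ℕ) (P : Matrix (Config compat) (Config compat) ℝ) : Prop where
  apply_erase : ∀ Γ Γ' : Config compat, ∀ γ ∈ Γ.1,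
    Γ'.1 = Γ.1.erase γ → P Γ Γ' = ((Eγ γ).card : ℝ) / (2 * m)
  apply_insert : ∀ Γ Γ' : Config compat, ∀ γ, γ ∉ Γ.1 →
    Γ'.1 = insert γ Γ.1 → P Γ Γ' = ((Eγ γ).card : ℝ) * w γ / (2 * m)
  apply_eq_zero : ∀ Γ Γ' : Config compat, Γ ≠ Γ' →
    (¬∃ γ ∈ Γ.1, Γ'.1 = Γ.1.erase γ) → (¬∃ γ ∉ Γ.1, Γ'.1 = insert γ Γ.1) → P Γ Γ' = 0

/-- The factor in `P(Γ, Γ ∆ {γ}) = |E_γ| · toggleWeight Γ γ / 2m`. -/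
def toggleWeight (compat : Pol → Pol → Prop) (w : Pol → ℝ) (Γ : Finset Pol) (γ : Pol) : ℝ :=
  if γ ∈ Γ then 1 else if ValidConfig compat (insert γ Γ) then w γ else 0

variable {compat : Pol → Pol → Prop} {w : Pol → ℝ} {Eγ : Pol → Finset Edge} {m : ℕ}
  {P : Matrix (Config compat) (Config compat) ℝ}

theorem sum_toggleWeight_le_one [Fintype Pol] [DecidableEq Edge] (hw : ∀ γ, 0 ≤ w γ)
    (hdisj : ∀ γ γ', γ ≠ γ' → compat γ γ' → Disjoint (Eγ γ) (Eγ γ'))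
    (hν : ∀ e : Edge, ∑ γ ∈ Finset.univ.filter (fun γ => e ∈ Eγ γ), w γ ≤ 1)
    {Γ : Finset Pol} (hΓ : ValidConfig compat Γ) (e : Edge) :
    ∑ γ ∈ Finset.univ.filter (fun γ => e ∈ Eγ γ), toggleWeight compat w Γ γ ≤ 1 := by
  by_cases hcov : ∃ γ₀ ∈ Γ, e ∈ Eγ γ₀
  · obtain ⟨γ₀, hγ₀, he₀⟩ := hcov
    rw [Finset.sum_eq_single_of_mem γ₀ (by simp [he₀])]
    · simp [toggleWeight, hγ₀]
    intro γ hγ hne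
    have hincompat : ¬compat γ γ₀ := fun hc =>
      Finset.disjoint_left.1 (hdisj γ γ₀ hne hc) (Finset.mem_filter.1 hγ).2 he₀
    simp only [toggleWeight]
    split_ifs with hmem hins
    · exact absurd (hΓ γ hmem γ₀ hγ₀ hne) hincompat
    · exact absurd (hins γ (Finset.mem_insert_self γ Γ) γ₀ (Finset.mem_insert_of_mem hγ₀) hne)
        hincompat
    · rfl
  · push Not at hcov
    refine le_trans (Finset.sum_le_sum fun γ hγ => ?_) (hν e)
    have hγΓ : γ ∉ Γ := fun hmem => hcov γ hmem (Finset.mem_filter.1 hγ).2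
    simp only [toggleWeight, if_neg hγΓ]
    split_ifs
    exacts [le_rfl, hw γ]

theorem sum_card_mul_toggleWeight_le [Fintype Pol] [Fintype Edge] [DecidableEq Edge]
    (hw : ∀ γ, 0 ≤ w γ)
    (hdisj : ∀ γ γ', γ ≠ γ' → compat γ γ' → Disjoint (Eγ γ) (Eγ γ'))
    (hν : ∀ e : Edge, ∑ γ ∈ Finset.univ.filter (fun γ => e ∈ Eγ γ), w γ ≤ 1)
    {Γ : Finset Pol} (hΓ : ValidConfig compat Γ) :
    ∑ γ, ((Eγ γ).card : ℝ) * toggleWeight compat w Γ γ ≤ Fintype.card Edge := by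
  calc ∑ γ, ((Eγ γ).card : ℝ) * toggleWeight compat w Γ γ
      = ∑ γ, ∑ _e ∈ Eγ γ, toggleWeight compat w Γ γ := by simp [Finset.sum_const]
    _ = ∑ e, ∑ γ ∈ Finset.univ.filter (fun γ => e ∈ Eγ γ), toggleWeight compat w Γ γ :=
        Finset.sum_comm' fun γ e => by simp
    _ ≤ ∑ _e : Edge, (1 : ℝ) :=
        Finset.sum_le_sum fun e _ => sum_toggleWeight_le_one hw hdisj hν hΓ e
    _ = Fintype.card Edge := by simp

theorem ValidConfig.symmDiff_singleton {Γ : Finset Pol} {γ : Pol} (hΓ : ValidConfig compat Γ)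
    (hγ : toggleWeight compat w Γ γ ≠ 0) : ValidConfig compat (symmDiff Γ {γ}) := by
  by_cases hmem : γ ∈ Γ
  · rw [Finset.symmDiff_singleton_of_mem hmem]
    exact hΓ.mono (Finset.erase_subset γ Γ)
  · rw [Finset.symmDiff_singleton_of_notMem hmem]
    by_contra hins
    simp [toggleWeight, hmem, hins] at hγ

theorem IsPolymerDynamics.apply_of_eq_symmDiff (hP : IsPolymerDynamics compat w Eγ m P)
    {Γ Γ' : Config compat} {γ : Pol} (h : Γ'.1 = symmDiff Γ.1 {γ}) :
    P Γ Γ' = (Eγ γ).card * toggleWeight compat w Γ.1 γ / (2 * m) := by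
  by_cases hmem : γ ∈ Γ.1
  · rw [Finset.symmDiff_singleton_of_mem hmem] at h
    rw [hP.apply_erase Γ Γ' γ hmem h, toggleWeight, if_pos hmem, mul_one]
  · rw [Finset.symmDiff_singleton_of_notMem hmem] at h
    have hins : ValidConfig compat (insert γ Γ.1) := h ▸ Γ'.2
    rw [hP.apply_insert Γ Γ' γ hmem h, toggleWeight, if_neg hmem, if_pos hins]

theorem IsPolymerDynamics.exists_eq_symmDiff (hP : IsPolymerDynamics compat w Eγ m P)
    {Γ Γ' : Config compat} (hne : Γ ≠ Γ') (hP0 : P Γ Γ' ≠ 0) :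
    ∃ γ, Γ'.1 = symmDiff Γ.1 {γ} := by
  by_contra hno
  refine hP0 (hP.apply_eq_zero Γ Γ' hne ?_ ?_)
  · rintro ⟨γ, hγ, h⟩
    exact hno ⟨γ, h.trans (Finset.symmDiff_singleton_of_mem hγ).symm⟩
  · rintro ⟨γ, hγ, h⟩
    exact hno ⟨γ, h.trans (Finset.symmDiff_singleton_of_notMem hγ).symm⟩

theorem IsPolymerDynamics.sum_erase_apply [Fintype Pol] (hP : IsPolymerDynamics compat w Eγ m P)
    (Γ : Config compat) :
    ∑ Γ' ∈ Finset.univ.erase Γ, P Γ Γ' =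
      ∑ γ, (Eγ γ).card * toggleWeight compat w Γ.1 γ / (2 * m) := by
  symm
  refine Finset.sum_bij_ne_zero
    (fun γ _ hγ => ⟨symmDiff Γ.1 {γ}, Γ.2.symmDiff_singleton (right_ne_zero_of_mul
      (div_ne_zero_iff.1 hγ).1)⟩) ?_ ?_ ?_ ?_
  · intro γ _ _
    simp [Subtype.ext_iff, symmDiff_eq_left]
  · intro γ₁ _ _ γ₂ _ _ h
    exact Finset.singleton_injective (symmDiff_right_injective Γ.1 (congrArg Subtype.val h))
  · intro Γ' hΓ' hP0
    obtain ⟨γ, hγ⟩ := hP.exists_eq_symmDiff (Finset.ne_of_mem_erase hΓ').symm hP0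
    exact ⟨γ, Finset.mem_univ γ, hP.apply_of_eq_symmDiff hγ ▸ hP0, Subtype.ext hγ.symm⟩
  · intro γ _ _
    exact (hP.apply_of_eq_symmDiff rfl).symm

theorem IsPolymerDynamics.half_le_apply_self [Fintype Pol] [Fintype Edge] [DecidableEq Edge]
    (hP : IsPolymerDynamics compat w Eγ m P)
    (hrow : ∀ Γ, ∑ Γ', P Γ Γ' = 1) (hw : ∀ γ, 0 ≤ w γ)
    (hdisj : ∀ γ γ', γ ≠ γ' → compat γ γ' → Disjoint (Eγ γ) (Eγ γ'))
    (hν : ∀ e : Edge, ∑ γ ∈ Finset.univ.filter (fun γ => e ∈ Eγ γ), w γ ≤ 1)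
    (hm : m = Fintype.card Edge) (Γ : Config compat) : 1 / 2 ≤ P Γ Γ := by
  have hoff : ∑ Γ' ∈ Finset.univ.erase Γ, P Γ Γ' ≤ 1 / 2 := by
    rw [hP.sum_erase_apply, ← Finset.sum_div]
    calc (∑ γ, (Eγ γ).card * toggleWeight compat w Γ.1 γ) / (2 * m) ≤ (m : ℝ) / (2 * m) := by
          gcongr
          exact hm ▸ sum_card_mul_toggleWeight_le hw hdisj hν Γ.2
      _ ≤ 1 / 2 := by
          rcases Nat.eq_zero_or_pos m with rfl | hpos
          · norm_num
          · rw [div_le_iff₀ (by positivity)]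
            linarith
  have := hrow Γ
  rw [← Finset.add_sum_erase _ _ (Finset.mem_univ Γ)] at this
  linarith

theorem IsPolymerDynamics.detailedBalance (hP : IsPolymerDynamics compat w Eγ m P)
    (Γ Γ' : Config compat) :
    (∏ γ ∈ Γ.1, w γ) * P Γ Γ' = (∏ γ ∈ Γ'.1, w γ) * P Γ' Γ := by
  have erase_step : ∀ Γ Γ' : Config compat, ∀ γ ∈ Γ.1, Γ'.1 = Γ.1.erase γ →
      (∏ γ ∈ Γ.1, w γ) * P Γ Γ' = (∏ γ ∈ Γ'.1, w γ) * P Γ' Γ := by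
    intro Γ Γ' γ hγ h
    rw [hP.apply_erase Γ Γ' γ hγ h,
      hP.apply_insert Γ' Γ γ (h ▸ Finset.notMem_erase γ Γ.1) (by rw [h, Finset.insert_erase hγ]),
      ← Finset.mul_prod_erase Γ.1 w hγ, ← h]
    ring
  by_cases h₁ : ∃ γ ∈ Γ.1, Γ'.1 = Γ.1.erase γ
  · obtain ⟨γ, hγ, h⟩ := h₁
    exact erase_step Γ Γ' γ hγ h
  by_cases h₂ : ∃ γ ∈ Γ'.1, Γ.1 = Γ'.1.erase γ
  · obtain ⟨γ, hγ, h⟩ := h₂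
    exact (erase_step Γ' Γ γ hγ h).symm
  by_cases hΓ : Γ = Γ'
  · rw [hΓ]
  rw [hP.apply_eq_zero Γ Γ' hΓ h₁ (Finset.exists_notMem_insert_iff.not.2 h₂),
    hP.apply_eq_zero Γ' Γ (Ne.symm hΓ) h₂ (Finset.exists_notMem_insert_iff.not.2 h₁),
    mul_zero, mul_zero]

theorem IsPolymerDynamics.reflTransGen [Fintype Edge] (hP : IsPolymerDynamics compat w Eγ m P)
    (hw : ∀ γ, 0 < w γ) (hE : ∀ γ, (Eγ γ).Nonempty) (hm : m = Fintype.card Edge)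
    (Γ Γ' : Config compat) : ReflTransGen (fun a b => 0 < P a b) Γ Γ' := by
  refine reflTransGen_of_erase (fun Γ Γ' γ hγ h => ?_) Γ Γ'
  have hcard : 0 < (Eγ γ).card := (hE γ).card_pos
  have hm_pos : 0 < m := hm ▸ Fintype.card_pos_iff.2 ⟨(hE γ).choose⟩
  have hwγ := hw γ
  constructor
  · rw [hP.apply_erase Γ Γ' γ hγ h]
    positivity
  · rw [hP.apply_insert Γ' Γ γ (h ▸ Finset.notMem_erase γ Γ.1)
      (by rw [h, Finset.insert_erase hγ])]
    positivity

end Dynamics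

variable {Pol Edge : Type*} [Fintype Pol] [DecidableEq Pol] [Fintype Edge]
  [DecidableEq Edge]

theorem polymer_dynamics_stationary_general
    (compat : Pol → Pol → Prop)
    (w : Pol → ℝ) (hw : ∀ γ, 0 < w γ)
    (Eγ : Pol → Finset Edge) (hEne : ∀ γ, (Eγ γ).Nonempty)
    (hdisj : ∀ γ γ', γ ≠ γ' → compat γ γ' → Disjoint (Eγ γ) (Eγ γ'))
    (m : ℕ) (hm : m = Fintype.card Edge)
    -- ν_e is a valid sub-probability distribution for every edge e
    (hν : ∀ e : Edge, ∑ γ ∈ Finset.univ.filter (fun γ => e ∈ Eγ γ), w γ ≤ 1)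
    (P : Matrix {Γ : Finset Pol // ValidConfig compat Γ}
                {Γ : Finset Pol // ValidConfig compat Γ} ℝ)
    (hP0 : ∀ Γ Γ', 0 ≤ P Γ Γ')
    (hProw : ∀ Γ, ∑ Γ', P Γ Γ' = 1)
    (hPrem : ∀ Γ Γ' : {Γ : Finset Pol // ValidConfig compat Γ}, ∀ γ ∈ Γ.1,
      Γ'.1 = Γ.1.erase γ → P Γ Γ' = ((Eγ γ).card : ℝ) / (2 * m))
    (hPadd : ∀ Γ Γ' : {Γ : Finset Pol // ValidConfig compat Γ}, ∀ γ, γ ∉ Γ.1 →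
      Γ'.1 = insert γ Γ.1 → P Γ Γ' = ((Eγ γ).card : ℝ) * w γ / (2 * m))
    (hPoff : ∀ Γ Γ' : {Γ : Finset Pol // ValidConfig compat Γ}, Γ ≠ Γ' →
      (¬∃ γ ∈ Γ.1, Γ'.1 = Γ.1.erase γ) → (¬∃ γ ∉ Γ.1, Γ'.1 = insert γ Γ.1) →
      P Γ Γ' = 0)
    (Z : ℝ) (hZ : Z = ∑ Γ : {Γ : Finset Pol // ValidConfig compat Γ}, ∏ γ ∈ Γ.1, w γ)
    (μ : {Γ : Finset Pol // ValidConfig compat Γ} → ℝ)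
    (hμ : ∀ Γ, μ Γ = (∏ γ ∈ Γ.1, w γ) / Z) :
    -- detailed balance
    (∀ Γ Γ', μ Γ * P Γ Γ' = μ Γ' * P Γ' Γ) ∧
      -- irreducibility
      (∀ Γ Γ', ∃ k : ℕ, 0 < (P ^ k) Γ Γ') ∧
      -- aperiodicity (self-loops)
      (∀ Γ, 0 < P Γ Γ) ∧
      -- μ is the unique stationary distribution
      (∀ Γ', ∑ Γ, μ Γ * P Γ Γ' = μ Γ') ∧
      ∀ π : {Γ : Finset Pol // ValidConfig compat Γ} → ℝ,
        (∀ Γ, 0 ≤ π Γ) → (∑ Γ, π Γ = 1) →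
        (∀ Γ', ∑ Γ, π Γ * P Γ Γ' = π Γ') → π = μ := by
  have hPd : IsPolymerDynamics compat w Eγ m P := ⟨hPrem, hPadd, hPoff⟩
  have hZpos : 0 < Z := hZ ▸ Finset.sum_pos (fun Γ _ => Finset.prod_pos fun γ _ => hw γ)
    ⟨⟨∅, validConfig_empty⟩, Finset.mem_univ _⟩
  have hμpos : ∀ Γ, 0 < μ Γ := fun Γ =>
    hμ Γ ▸ div_pos (Finset.prod_pos fun γ _ => hw γ) hZpos
  have hμ1 : ∑ Γ, μ Γ = 1 := by
    simp_rw [hμ, ← Finset.sum_div, ← hZ, div_self hZpos.ne']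
  have hDB : ∀ Γ Γ', μ Γ * P Γ Γ' = μ Γ' * P Γ' Γ := fun Γ Γ' => by
    rw [hμ, hμ, div_mul_eq_mul_div, div_mul_eq_mul_div, hPd.detailedBalance]
  have hirr := hPd.reflTransGen hw hEne hm
  refine ⟨hDB, fun Γ Γ' => Matrix.exists_pow_apply_pos_of_reflTransGen hP0 (hirr Γ Γ'),
    fun Γ => one_half_pos.trans_le
      (hPd.half_le_apply_self hProw (fun γ => (hw γ).le) hdisj hν hm Γ),
    congrFun (Matrix.vecMul_eq_of_detailedBalance hProw hDB), fun π _ hπ1 hπ => ?_⟩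
  exact Matrix.eq_of_vecMul_eq_of_detailedBalance
    (Matrix.mem_rowStochastic_iff_sum.2 ⟨hP0, hProw⟩) hirr hμpos hDB hμ1 (funext hπ) hπ1

/-- The polymer dynamics on a polymer model (allowed polymers `Pol` with
positive weights `w`, edge sets `Eγ γ ≠ ∅`, symmetric compatibility relation
`compat`, on a graph with `m` edges): pick a uniformly random edge `e`; with
probability 1/2 remove the unique polymer `γ_e` whose edge set contains `e`
(if any); with probability 1/2 sample `γ` from `ν_e` (where `ν_e(γ) = w(γ)`
for `e ∈ E_γ`, assumed a valid sub-probability distribution) and add it if the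
result is compatible.  Thus the transition matrix `P` satisfies
`P(Γ, Γ∖{γ}) = |E_γ|/(2m)` and `P(Γ, Γ∪{γ}) = |E_γ|·w(γ)/(2m)`, all other
off-diagonal entries vanish, and rows sum to 1.  Then the Gibbs distribution
`μ(Γ) = ∏_{γ∈Γ} w(γ) / Z` satisfies detailed balance for `P`, the chain is
irreducible and aperiodic, and hence `μ` is its unique stationary
distribution. -/
theorem polymer_dynamics_stationary
    (compat : Pol → Pol → Prop) (hsymm : ∀ γ γ', compat γ γ' → compat γ' γ)
    (w : Pol → ℝ) (hw : ∀ γ, 0 < w γ)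
    (Eγ : Pol → Finset Edge) (hEne : ∀ γ, (Eγ γ).Nonempty)
    (hdisj : ∀ γ γ', γ ≠ γ' → compat γ γ' → Disjoint (Eγ γ) (Eγ γ'))
    (m : ℕ) (hm : m = Fintype.card Edge)
    -- ν_e is a valid sub-probability distribution for every edge e
    (hν : ∀ e : Edge, ∑ γ ∈ Finset.univ.filter (fun γ => e ∈ Eγ γ), w γ ≤ 1)
    (P : Matrix {Γ : Finset Pol // ValidConfig compat Γ}
                {Γ : Finset Pol // ValidConfig compat Γ} ℝ)
    (hP0 : ∀ Γ Γ', 0 ≤ P Γ Γ')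
    (hProw : ∀ Γ, ∑ Γ', P Γ Γ' = 1)
    (hPrem : ∀ Γ Γ' : {Γ : Finset Pol // ValidConfig compat Γ}, ∀ γ ∈ Γ.1,
      Γ'.1 = Γ.1.erase γ → P Γ Γ' = ((Eγ γ).card : ℝ) / (2 * m))
    (hPadd : ∀ Γ Γ' : {Γ : Finset Pol // ValidConfig compat Γ}, ∀ γ, γ ∉ Γ.1 →
      Γ'.1 = insert γ Γ.1 → P Γ Γ' = ((Eγ γ).card : ℝ) * w γ / (2 * m))
    (hPoff : ∀ Γ Γ' : {Γ : Finset Pol // ValidConfig compat Γ}, Γ ≠ Γ' →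
      (¬∃ γ ∈ Γ.1, Γ'.1 = Γ.1.erase γ) → (¬∃ γ ∉ Γ.1, Γ'.1 = insert γ Γ.1) →
      P Γ Γ' = 0)
    (Z : ℝ) (hZ : Z = ∑ Γ : {Γ : Finset Pol // ValidConfig compat Γ}, ∏ γ ∈ Γ.1, w γ)
    (μ : {Γ : Finset Pol // ValidConfig compat Γ} → ℝ)
    (hμ : ∀ Γ, μ Γ = (∏ γ ∈ Γ.1, w γ) / Z) :
    -- detailed balance
    (∀ Γ Γ', μ Γ * P Γ Γ' = μ Γ' * P Γ' Γ) ∧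
      -- irreducibility
      (∀ Γ Γ', ∃ k : ℕ, 0 < (P ^ k) Γ Γ') ∧
      -- aperiodicity (self-loops)
      (∀ Γ, 0 < P Γ Γ) ∧
      -- μ is the unique stationary distribution
      (∀ Γ', ∑ Γ, μ Γ * P Γ Γ' = μ Γ') ∧
      ∀ π : {Γ : Finset Pol // ValidConfig compat Γ} → ℝ,
        (∀ Γ, 0 ≤ π Γ) → (∑ Γ, π Γ = 1) →
        (∀ Γ', ∑ Γ, π Γ * P Γ Γ' = π Γ') → π = μ :=
  polymer_dynamics_stationary_general compat w hw Eγ hEne hdisj m hm hν P hP0 hProw hPrem hPadd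
    hPoff Z hZ μ hμ

end PolymerDynamics
end
end
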